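/- arXiv:1309.3470 — 9 statements merged into one kernel-verified Lean document; each statement's English description precedes it below -/
import Mathlib

section
/- Let A be a strongly positive bounded linear self-adjoint operator on a real Hilbert space H with coefficient γ̄ > 0, and let ρ be a real number with 0 < ρ ≤ ‖A‖⁻¹. Then the operator norm of I − ρA satisfies ‖I − ρA‖ ≤ 1 − ρ γ̄. -/
/-!
For a symmetric operator `T`, `‖T‖` is the supremum of `|⟪T x, x⟫| / ‖x‖²`. With `T = 1 - ρ • A`
the quadratic form `⟪T x, x⟫ = ‖x‖² - ρ ⟪A x, x⟫` is squeezed between `(1 - ρ ‖A‖) ‖x‖² ≥ 0` and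
`(1 - ρ γ̄) ‖x‖²`, so `‖T‖ ≤ 1 - ρ γ̄`.
-/

open scoped RealInnerProductSpace

namespace ContinuousLinearMap

theorem opNorm_le_of_abs_re_inner_self_le {𝕜 E : Type*} [RCLike 𝕜] [NormedAddCommGroup E]
    [InnerProductSpace 𝕜 E] {T : E →L[𝕜] E} (hT : (T : E →ₗ[𝕜] E).IsSymmetric) {M : ℝ}
    (hM : 0 ≤ M) (h : ∀ x, |RCLike.re (inner 𝕜 (T x) x)| ≤ M * ‖x‖ ^ 2) : ‖T‖ ≤ M := by
  rw [T.norm_eq_iSup_rayleighQuotient hT]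
  refine ciSup_le fun x => ?_
  rcases eq_or_ne x 0 with rfl | hx
  · simpa using hM
  · rw [rayleighQuotient, abs_div, abs_sq, reApplyInnerSelf_apply,
      div_le_iff₀ (by positivity)]
    exact h x

variable {E : Type*} [NormedAddCommGroup E] [InnerProductSpace ℝ E]

theorem real_inner_apply_self_le (A : E →L[ℝ] E) (x : E) : ⟪A x, x⟫ ≤ ‖A‖ * ‖x‖ ^ 2 :=
  calc ⟪A x, x⟫ ≤ ‖A x‖ * ‖x‖ := real_inner_le_norm _ _
    _ ≤ ‖A‖ * ‖x‖ * ‖x‖ := by gcongr; exact A.le_opNorm x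
    _ = ‖A‖ * ‖x‖ ^ 2 := by ring

theorem le_opNorm_of_le_real_inner_apply_self [Nontrivial E] {A : E →L[ℝ] E} {m : ℝ}
    (hm : ∀ x, m * ‖x‖ ^ 2 ≤ ⟪A x, x⟫) : m ≤ ‖A‖ := by
  obtain ⟨x, hx⟩ := exists_ne (0 : E)
  exact le_of_mul_le_mul_right ((hm x).trans (A.real_inner_apply_self_le x))
    (by positivity)

theorem opNorm_one_sub_smul_le {A : E →L[ℝ] E} (hA : (A : E →ₗ[ℝ] E).IsSymmetric) {m ρ : ℝ}
    (hm : ∀ x, m * ‖x‖ ^ 2 ≤ ⟪A x, x⟫) (hρ : 0 ≤ ρ) (hρA : ρ * ‖A‖ ≤ 1) (hρm : ρ * m ≤ 1) :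
    ‖1 - ρ • A‖ ≤ 1 - ρ * m := by
  have hsymm : ((1 - ρ • A : E →L[ℝ] E) : E →ₗ[ℝ] E).IsSymmetric := fun x y => by
    simp only [coe_coe, sub_apply, smul_apply, one_apply_eq_self, inner_sub_left,
      inner_sub_right, real_inner_smul_left, real_inner_smul_right]
    rw [show ⟪A x, y⟫ = ⟪x, A y⟫ from hA x y]
  refine opNorm_le_of_abs_re_inner_self_le hsymm (by linarith) fun x => ?_
  have hquad : ⟪(1 - ρ • A) x, x⟫ = ‖x‖ ^ 2 - ρ * ⟪A x, x⟫ := by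
    rw [sub_apply, smul_apply, one_apply_eq_self, inner_sub_left, real_inner_smul_left,
      real_inner_self_eq_norm_sq]
  have hupper := mul_le_mul_of_nonneg_left (hm x) hρ
  have hlower := mul_le_mul_of_nonneg_left (A.real_inner_apply_self_le x) hρ
  rw [RCLike.re_to_real, hquad, abs_le]
  constructor <;> nlinarith [sq_nonneg ‖x‖]

end ContinuousLinearMap

theorem stmt_4_general {H : Type*} [NormedAddCommGroup H] [InnerProductSpace ℝ H]
    (A : H →L[ℝ] H) (hAsa : ∀ x y : H, ⟪A x, y⟫ = ⟪x, A y⟫)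
    (γbar : ℝ)
    (hApos : ∀ x : H, γbar * ‖x‖ ^ 2 ≤ ⟪A x, x⟫)
    (ρ : ℝ) (hρ0 : 0 < ρ) (hρ : ρ ≤ ‖A‖⁻¹) :
    ‖(1 : H →L[ℝ] H) - ρ • A‖ ≤ 1 - ρ * γbar := by
  have hA : 0 < ‖A‖ := inv_pos.mp (hρ0.trans_le hρ)
  have : Nontrivial H := by
    by_contra h
    rw [not_nontrivial_iff_subsingleton] at h
    simp [Subsingleton.elim A 0] at hA
  have hρA : ρ * ‖A‖ ≤ 1 := (le_div_iff₀ hA).mp (by rwa [one_div])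
  have hργ : ρ * γbar ≤ 1 :=
    (mul_le_mul_of_nonneg_left (A.le_opNorm_of_le_real_inner_apply_self hApos) hρ0.le).trans hρA
  exact A.opNorm_one_sub_smul_le hAsa hApos hρ0.le hρA hργ

/-- If `A` is a strongly positive bounded linear self-adjoint operator on a real
Hilbert space `H` with coefficient `γbar > 0` and `0 < ρ ≤ ‖A‖⁻¹`, then
`‖I - ρ • A‖ ≤ 1 - ρ * γbar`. -/
theorem stmt_4 {H : Type*} [NormedAddCommGroup H] [InnerProductSpace ℝ H]
    [CompleteSpace H]
    (A : H →L[ℝ] H) (hAsa : ∀ x y : H, ⟪A x, y⟫ = ⟪x, A y⟫)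
    (γbar : ℝ) (hγbar : 0 < γbar)
    (hApos : ∀ x : H, γbar * ‖x‖ ^ 2 ≤ ⟪A x, x⟫)
    (ρ : ℝ) (hρ0 : 0 < ρ) (hρ : ρ ≤ ‖A‖⁻¹) :
    ‖(1 : H →L[ℝ] H) - ρ • A‖ ≤ 1 - ρ * γbar :=
  stmt_4_general A hAsa γbar hApos ρ hρ0 hρ
end

section
/- Let (x_n) and (y_n) be bounded sequences in a Banach space X and let (β_n) be a sequence in [0,1] with 0 < liminf_{n→∞} β_n ≤ limsup_{n→∞} β_n < 1. Suppose x_{n+1} = (1 − β_n) y_n + β_n x_n for all n ≥ 0 and limsup_{n→∞} (‖y_{n+1} − y_n‖ − ‖x_{n+1} − x_n‖) ≤ 0. Then lim_{n→∞} ‖y_n − x_n‖ = 0. -/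
set_option maxHeartbeats 1000000
open Filter Topology

lemma norm_telescope {X : Type*} [NormedAddCommGroup X] (y : ℕ → X) (n : ℕ) :
    ∀ m : ℕ, ‖y (n + m) - y n‖ ≤ ∑ j ∈ Finset.range m, ‖y (n + j + 1) - y (n + j)‖ := by
  intro m
  induction m with
  | zero => simp
  | succ m ih =>
    rw [Finset.sum_range_succ]
    have h3 : ‖y (n + (m + 1)) - y n‖ ≤ ‖y (n + m + 1) - y (n + m)‖ + ‖y (n + m) - y n‖ := by
      have := dist_triangle (y (n + m + 1)) (y (n + m)) (y n)
      simpa [dist_eq_norm, show n + (m + 1) = n + m + 1 from rfl] using this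
    linarith

lemma suzuki_key {X : Type*} [NormedAddCommGroup X] [NormedSpace ℝ X]
    (x y : ℕ → X) (β : ℕ → ℝ) (a b : ℝ) (ha : 0 < a) (hb : b < 1) :
    ∀ m : ℕ, ∃ C : ℝ, 0 ≤ C ∧ ∀ (n : ℕ) (D ε : ℝ), 0 < ε → ε ≤ D →
      (∀ i ≤ m, a ≤ β (n + i) ∧ β (n + i) ≤ b) →
      (∀ i ≤ m, x (n + i + 1) = (1 - β (n + i)) • y (n + i) + β (n + i) • x (n + i)) →
      (∀ i ≤ m, D - ε ≤ ‖y (n + i) - x (n + i)‖ ∧ ‖y (n + i) - x (n + i)‖ ≤ D + ε) →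
      (∀ i ≤ m, ‖y (n + i + 1) - y (n + i)‖ ≤ (1 - β (n + i)) * ‖y (n + i) - x (n + i)‖ + ε) →
      (1 + ∑ i ∈ Finset.range m, (1 - β (n + i))) * (D - ε) - C * ε ≤ ‖y (n + m) - x n‖ := by
  intro m
  induction m with
  | zero =>
    refine ⟨0, le_refl 0, fun n D ε hε hεD hβab hrec hd hΔ => ?_⟩
    simpa using (hd 0 (le_refl 0)).1
  | succ m IH =>
    obtain ⟨C, hC0, hC⟩ := IH
    refine ⟨(C + 3 * (m + 1)) / a, by positivity, ?_⟩
    intro n D ε hε hεD hβab hrec hd hΔ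
    have hβn : a ≤ β n ∧ β n ≤ b := by have h := hβab 0 (Nat.zero_le _); simpa using h
    have hβpos : 0 < β n := lt_of_lt_of_le ha hβn.1
    -- IH at base n+1
    have hIH := hC (n + 1) D ε hε hεD
      (fun i hi => by
        have h := hβab (i + 1) (by omega)
        rwa [show n + (i + 1) = n + 1 + i by omega] at h)
      (fun i hi => by
        have h := hrec (i + 1) (by omega)
        rwa [show n + (i + 1) = n + 1 + i by omega] at h)
      (fun i hi => by
        have h := hd (i + 1) (by omega)
        rwa [show n + (i + 1) = n + 1 + i by omega] at h)
      (fun i hi => by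
        have h := hΔ (i + 1) (by omega)
        rwa [show n + (i + 1) = n + 1 + i by omega] at h)
    -- telescoping bound on T = ‖y (n+(m+1)) - y n‖
    set Q : ℝ := ∑ j ∈ Finset.range (m + 1), (1 - β (n + j)) with hQdef
    have hT : ‖y (n + (m + 1)) - y n‖ ≤ Q * (D + ε) + (m + 1) * ε := by
      have h1 := norm_telescope y n (m + 1)
      have h2 : ∑ j ∈ Finset.range (m + 1), ‖y (n + j + 1) - y (n + j)‖ ≤
          ∑ j ∈ Finset.range (m + 1), ((1 - β (n + j)) * (D + ε) + ε) := by
        apply Finset.sum_le_sum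
        intro j hj
        have hj' : j ≤ m + 1 := le_of_lt (by simpa using Finset.mem_range.mp hj)
        have h3 := hΔ j hj'
        have h4 := (hd j hj').2
        have h5 : (0:ℝ) ≤ 1 - β (n + j) := by have := (hβab j hj').2; linarith
        nlinarith [h3, mul_le_mul_of_nonneg_left h4 h5]
      have h6 : ∑ j ∈ Finset.range (m + 1), ((1 - β (n + j)) * (D + ε) + ε)
          = Q * (D + ε) + (m + 1) * ε := by
        rw [Finset.sum_add_distrib, ← Finset.sum_mul, Finset.sum_const, Finset.card_range]
        push_cast
        ring
      linarith
    -- algebraic identity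
    have hrec0 : x (n + 1) = (1 - β n) • y n + β n • x n := by
      have h := hrec 0 (Nat.zero_le _)
      simpa using h
    have hid : (β n) • (y (n + (m + 1)) - x n)
        = (y (n + (m + 1)) - x (n + 1)) - (1 - β n) • (y (n + (m + 1)) - y n) := by
      rw [hrec0]
      module
    have hnorm : β n * ‖y (n + (m + 1)) - x n‖
        ≥ ‖y (n + (m + 1)) - x (n + 1)‖ - (1 - β n) * ‖y (n + (m + 1)) - y n‖ := by
      have h1 : ‖(β n) • (y (n + (m + 1)) - x n)‖ = β n * ‖y (n + (m + 1)) - x n‖ := by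
        rw [norm_smul, Real.norm_eq_abs, abs_of_pos hβpos]
      have h2 : ‖(1 - β n) • (y (n + (m + 1)) - y n)‖
          = (1 - β n) * ‖y (n + (m + 1)) - y n‖ := by
        rw [norm_smul, Real.norm_eq_abs, abs_of_nonneg (by linarith [hβn.2] : (0:ℝ) ≤ 1 - β n)]
      rw [← h1, hid]
      calc ‖y (n + (m + 1)) - x (n + 1)‖ - (1 - β n) * ‖y (n + (m + 1)) - y n‖
          = ‖y (n + (m + 1)) - x (n + 1)‖ - ‖(1 - β n) • (y (n + (m + 1)) - y n)‖ := by rw [h2]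
        _ ≤ ‖(y (n + (m + 1)) - x (n + 1)) - (1 - β n) • (y (n + (m + 1)) - y n)‖ :=
            norm_sub_norm_le _ _
    -- sums relation: Q = (1 - β n) + P
    set P : ℝ := ∑ i ∈ Finset.range m, (1 - β (n + 1 + i)) with hPdef
    have hQP : Q = (1 - β n) + P := by
      rw [hQdef, Finset.sum_range_succ']
      simp only [Nat.add_zero]
      rw [add_comm]
      congr 1
      apply Finset.sum_congr rfl
      intro i _
      congr 2
      omega
    have hP0 : 0 ≤ P := Finset.sum_nonneg (fun i hi => by
      have := (hβab (i + 1) (by have := Finset.mem_range.mp hi; omega)).2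
      rw [show n + (i + 1) = n + 1 + i by omega] at this
      linarith)
    have hPm : P ≤ m := by
      calc P ≤ ∑ i ∈ Finset.range m, (1:ℝ) := Finset.sum_le_sum (fun i hi => by
            have h := (hβab (i + 1) (by have := Finset.mem_range.mp hi; omega)).1
            rw [show n + (i + 1) = n + 1 + i by omega] at h
            linarith)
        _ = m := by simp
    have hDε : 0 ≤ D - ε := by linarith
    have hc1 : 1 - β n ≤ 1 := by linarith
    have hc0 : 0 ≤ 1 - β n := by linarith [hβn.2]
    have hT0 : (0:ℝ) ≤ ‖y (n + (m + 1)) - y n‖ := norm_nonneg _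
    -- C' relation
    have hCC : C + 3 * (m + 1) ≤ β n * ((C + 3 * (m + 1)) / a) := by
      have h1 : a * ((C + 3 * (m + 1)) / a) = C + 3 * (m + 1) := by
        field_simp
      nlinarith [hβn.1, div_nonneg (by positivity : (0:ℝ) ≤ C + 3 * (m + 1)) ha.le]
    -- final arithmetic
    rw [show n + 1 + m = n + (m + 1) by omega] at hIH
    have hmono := mul_le_mul_of_nonneg_left hT hc0
    set S := ‖y (n + (m + 1)) - x n‖ with hS
    set S1 := ‖y (n + (m + 1)) - x (n + 1)‖ with hS1
    set T := ‖y (n + (m + 1)) - y n‖ with hTd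
    set C' := (C + 3 * (m + 1)) / a with hC'
    have hgoal : β n * ((1 + Q) * (D - ε) - C' * ε) ≤ β n * S := by
      have key : β n * ((1 + Q) * (D - ε) - C' * ε)
          ≤ ((1 + P) * (D - ε) - C * ε) - (1 - β n) * (Q * (D + ε) + (m + 1) * ε) := by
        have hQ1 : Q ≤ m + 1 := by rw [hQP]; linarith
        have hQ0 : 0 ≤ Q := by rw [hQP]; linarith
        have expand : β n * ((1 + Q) * (D - ε)) + (1 - β n) * Q * (D - ε)
            = (1 + P) * (D - ε) := by rw [hQP]; ring
        nlinarith [mul_nonneg (mul_nonneg hc0 hQ0) hε.le,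
          mul_le_mul_of_nonneg_right (mul_le_mul hc1 hQ1 hQ0 (by norm_num : (0:ℝ) ≤ 1)) hε.le,
          mul_le_mul_of_nonneg_right (mul_le_mul_of_nonneg_right hc1 (by positivity : (0:ℝ) ≤ (m:ℝ) + 1)) hε.le,
          mul_pos hε hβpos]
      linarith [hnorm, hIH, hmono]
    exact le_of_mul_le_mul_left hgoal hβpos

/-- **Suzuki's lemma.** Let `(x n)` and `(y n)` be bounded sequences in a Banach
space `X` and `(β n)` a sequence in `[0,1]` with
`0 < liminf β n ≤ limsup β n < 1`.  If `x (n+1) = (1 - β n) • y n + β n • x n`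
for all `n ≥ 0` and `limsup (‖y (n+1) - y n‖ - ‖x (n+1) - x n‖) ≤ 0`, then
`‖y n - x n‖ → 0`. -/
theorem stmt_5 {X : Type*} [NormedAddCommGroup X] [NormedSpace ℝ X]
    [CompleteSpace X]
    (x y : ℕ → X) (β : ℕ → ℝ)
    (hx : Bornology.IsBounded (Set.range x))
    (hy : Bornology.IsBounded (Set.range y))
    (hβ : ∀ n, β n ∈ Set.Icc (0 : ℝ) 1)
    (hβ0 : 0 < liminf β atTop) (hβ1 : limsup β atTop < 1)
    (hrec : ∀ n, x (n + 1) = (1 - β n) • y n + β n • x n)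
    (hlim : limsup (fun n => ‖y (n + 1) - y n‖ - ‖x (n + 1) - x n‖) atTop ≤ 0) :
    Filter.Tendsto (fun n => ‖y n - x n‖) atTop (𝓝 0) := by
  obtain ⟨Rx, hRx⟩ := isBounded_iff_forall_norm_le.mp hx
  obtain ⟨Ry, hRy⟩ := isBounded_iff_forall_norm_le.mp hy
  set R := max Rx Ry with hRdef
  have hR : ∀ n, ‖x n‖ ≤ R ∧ ‖y n‖ ≤ R := fun n =>
    ⟨le_trans (hRx _ (Set.mem_range_self n)) (le_max_left _ _),
     le_trans (hRy _ (Set.mem_range_self n)) (le_max_right _ _)⟩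
  set d : ℕ → ℝ := fun n => ‖y n - x n‖ with hddef
  set γ : ℕ → ℝ := fun n => ‖y (n + 1) - y n‖ - ‖x (n + 1) - x n‖ with hγdef
  have hd0 : ∀ n, 0 ≤ d n := fun n => norm_nonneg _
  have hd2R : ∀ n, d n ≤ 2 * R := fun n => by
    have := norm_sub_le (y n) (x n)
    have h1 := (hR n).1; have h2 := (hR n).2
    simp only [hddef]; linarith
  have hxnorm : ∀ n, ‖x (n + 1) - x n‖ = (1 - β n) * d n := by
    intro n
    have hxs : x (n + 1) - x n = (1 - β n) • (y n - x n) := by rw [hrec n]; module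
    rw [hxs, norm_smul, Real.norm_eq_abs, abs_of_nonneg (by linarith [(hβ n).2] : (0:ℝ) ≤ 1 - β n)]
  have hdsucc : ∀ n, d (n + 1) ≤ d n + γ n := by
    intro n
    have hys : y (n + 1) - x (n + 1) = (y (n + 1) - y n) + β n • (y n - x n) := by
      rw [hrec n]; module
    have h1 : d (n + 1) ≤ ‖y (n + 1) - y n‖ + β n * d n := by
      simp only [hddef]
      calc ‖y (n + 1) - x (n + 1)‖ ≤ ‖y (n + 1) - y n‖ + ‖β n • (y n - x n)‖ := by
            rw [hys]; exact norm_add_le _ _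
        _ = ‖y (n + 1) - y n‖ + β n * ‖y n - x n‖ := by
            rw [norm_smul, Real.norm_eq_abs, abs_of_nonneg (hβ n).1]
    have h2 : γ n = ‖y (n + 1) - y n‖ - (1 - β n) * d n := by
      simp only [hγdef]; rw [hxnorm n]
    linarith
  -- boundedness facts
  have hdbddle : IsBoundedUnder (· ≤ ·) atTop d := isBoundedUnder_of ⟨2 * R, hd2R⟩
  have hdbddge : IsBoundedUnder (· ≥ ·) atTop d := isBoundedUnder_of ⟨0, hd0⟩
  have hγbddle : IsBoundedUnder (· ≤ ·) atTop γ := isBoundedUnder_of ⟨2 * R, fun n => by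
    have h1 := norm_sub_le (y (n + 1)) (y n)
    have h2 := (hR (n + 1)).2; have h3 := (hR n).2
    have h4 : (0:ℝ) ≤ ‖x (n + 1) - x n‖ := norm_nonneg _
    simp only [hγdef]; linarith⟩
  have hβbddle : IsBoundedUnder (· ≤ ·) atTop β := isBoundedUnder_of ⟨1, fun n => (hβ n).2⟩
  have hβbddge : IsBoundedUnder (· ≥ ·) atTop β := isBoundedUnder_of ⟨0, fun n => (hβ n).1⟩
  set D := limsup d atTop with hDdef
  by_cases hDpos : D ≤ 0
  · -- conclude
    have h1 : (0:ℝ) ≤ liminf d atTop := le_liminf_of_le hdbddle.isCoboundedUnder_ge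
      (Eventually.of_forall hd0)
    have h2 : Tendsto d atTop (𝓝 0) :=
      tendsto_of_le_liminf_of_limsup_le h1 hDpos hdbddle hdbddge
    exact h2
  push_neg at hDpos
  exfalso
  -- choose a b
  set a := liminf β atTop / 2 with hadef
  have ha : 0 < a := by positivity
  have halt : a < liminf β atTop := by simpa [hadef] using half_lt_self hβ0
  set b := (limsup β atTop + 1) / 2 with hbdef
  have hblt : limsup β atTop < b := by simp only [hbdef]; linarith
  have hb1 : b < 1 := by simp only [hbdef]; linarith
  -- choose k
  obtain ⟨k, hk⟩ := exists_nat_gt ((2 * R + 2) / ((1 - b) * D))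
  have h1bD : 0 < (1 - b) * D := mul_pos (by linarith) hDpos
  have hkD : 2 * R + 2 < (1 + k * (1 - b)) * D := by
    have h1 : 2 * R + 2 < (k : ℝ) * ((1 - b) * D) := (div_lt_iff₀ h1bD).mp hk
    nlinarith
  -- get C from key lemma
  obtain ⟨C, hC0, hC⟩ := suzuki_key x y β a b ha hb1 k
  -- choose ε
  set ε := min D (1 / (1 + k * (1 - b) + C)) with hεdef
  have hden : 0 < 1 + k * (1 - b) + C := by
    have : (0:ℝ) ≤ (k : ℝ) * (1 - b) := mul_nonneg (Nat.cast_nonneg k) (by linarith)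
    linarith
  have hε : 0 < ε := lt_min hDpos (by positivity)
  have hεD : ε ≤ D := min_le_left _ _
  have hεsmall : (1 + k * (1 - b) + C) * ε ≤ 1 := by
    have h1 : ε ≤ 1 / (1 + k * (1 - b) + C) := min_le_right _ _
    calc (1 + k * (1 - b) + C) * ε ≤ (1 + k * (1 - b) + C) * (1 / (1 + k * (1 - b) + C)) :=
          mul_le_mul_of_nonneg_left h1 hden.le
      _ = 1 := by field_simp
  set ε' := ε / (k + 2) with hε'def
  have hε'pos : 0 < ε' := by positivity
  have hε'ε : ε' ≤ ε := by
    rw [hε'def]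
    apply div_le_self hε.le
    push_cast; linarith [Nat.cast_nonneg (α := ℝ) k]
  have hkε' : (k + 1 : ℝ) * ε' ≤ ε := by
    rw [hε'def, div_eq_inv_mul]
    rw [← mul_assoc]
    have h2 : (k + 1 : ℝ) * ((k:ℝ) + 2)⁻¹ ≤ 1 := by
      rw [mul_inv_le_iff₀ (by positivity)]
      linarith
    nlinarith
  -- get N
  have e1 : ∀ᶠ j in atTop, a < β j := eventually_lt_of_lt_liminf halt hβbddge
  have e2 : ∀ᶠ j in atTop, β j < b := eventually_lt_of_limsup_lt hblt hβbddle
  have e3 : ∀ᶠ j in atTop, d j < D + ε' := eventually_lt_of_limsup_lt (by linarith) hdbddle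
  have e4 : ∀ᶠ j in atTop, γ j < ε' := eventually_lt_of_limsup_lt (by
      exact lt_of_le_of_lt hlim hε'pos) hγbddle
  obtain ⟨N, hN⟩ := eventually_atTop.mp ((e1.and e2).and (e3.and e4))
  -- frequently d j close to D
  have hfreq : ∃ᶠ j in atTop, D - ε' < d j :=
    frequently_lt_of_lt_limsup hdbddge.isCoboundedUnder_le (by linarith)
  obtain ⟨j₀, hj₀ge, hj₀⟩ := (frequently_atTop.mp hfreq) (N + k)
  set n₀ := j₀ - k with hn₀def
  have hn₀N : N ≤ n₀ := by omega
  have hn₀k : n₀ + k = j₀ := by omega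
  -- growth bound
  have hgrow : ∀ p, N ≤ p → ∀ q, d (p + q) ≤ d p + q * ε' := by
    intro p hp q
    induction q with
    | zero => simp
    | succ q ih =>
      have h1 := hdsucc (p + q)
      have h2 := (hN (p + q) (by omega)).2.2
      push_cast
      have : d (p + (q + 1)) = d (p + q + 1) := by rw [show p + (q+1) = p + q + 1 from rfl]
      rw [this]
      nlinarith
  -- window lower bound
  have hlow : ∀ i ≤ k, D - ε ≤ d (n₀ + i) := by
    intro i hi
    have h1 := hgrow (n₀ + i) (by omega) (k - i)
    rw [show n₀ + i + (k - i) = j₀ by omega] at h1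
    have h2 : ((k - i : ℕ) : ℝ) ≤ k := by
      have : (k - i : ℕ) ≤ k := Nat.sub_le _ _
      exact_mod_cast this
    have h3 : ((k - i : ℕ) : ℝ) * ε' ≤ k * ε' := mul_le_mul_of_nonneg_right h2 hε'pos.le
    have h4 : D - ε' - k * ε' ≥ D - ε := by
      have : (k + 1 : ℝ) * ε' ≤ ε := hkε'
      nlinarith
    linarith
  -- apply key lemma
  have hkey := hC n₀ D ε hε hεD
    (fun i hi => by
      have h := (hN (n₀ + i) (by omega)).1
      exact ⟨h.1.le, h.2.le⟩)
    (fun i _ => hrec (n₀ + i))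
    (fun i hi => ⟨hlow i hi, by
      have h := (hN (n₀ + i) (by omega)).2.1
      have := hε'ε
      simp only [hddef] at h
      linarith⟩)
    (fun i hi => by
      have h1 := (hN (n₀ + i) (by omega)).2.2
      have h2 := hxnorm (n₀ + i)
      simp only [hγdef] at h1
      simp only [hddef] at h2 ⊢
      have := hε'ε
      linarith)
  -- contradiction
  have hub : ‖y (n₀ + k) - x n₀‖ ≤ 2 * R := by
    have h1 := norm_sub_le (y (n₀ + k)) (x n₀)
    have h2 := (hR (n₀ + k)).2; have h3 := (hR n₀).1
    linarith
  have hSig : (k : ℝ) * (1 - b) ≤ ∑ i ∈ Finset.range k, (1 - β (n₀ + i)) := by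
    calc (k : ℝ) * (1 - b) = ∑ _i ∈ Finset.range k, (1 - b) := by
          rw [Finset.sum_const, Finset.card_range]; push_cast; ring
      _ ≤ ∑ i ∈ Finset.range k, (1 - β (n₀ + i)) := Finset.sum_le_sum (fun i hi => by
          have h := (hN (n₀ + i) (by have := Finset.mem_range.mp hi; omega)).1.2
          linarith)
  have hDε0 : 0 ≤ D - ε := by linarith
  have hfin : (1 + (k:ℝ) * (1 - b)) * (D - ε) - C * ε ≤ 2 * R := by
    have h1 : (1 + (k:ℝ) * (1 - b)) * (D - ε) ≤
        (1 + ∑ i ∈ Finset.range k, (1 - β (n₀ + i))) * (D - ε) :=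
      mul_le_mul_of_nonneg_right (by linarith) hDε0
    linarith [hkey, hub]
  nlinarith [hfin, hkD, hεsmall, mul_pos hε hDpos]
end

section
/- Let C be a nonempty closed convex subset of a real Hilbert space H and let F : C × C → ℝ be a bifunction satisfying (A1)–(A4). Then for every r > 0 and every x ∈ H there exists z ∈ C such that F(z, y) + (1/r)⟨y − z, z − x⟩ ≥ 0 for all y ∈ C. -/
open Filter Topology Set Bornology
open scoped RealInnerProductSpace

/-!
Fix `r > 0`, `x ∈ H`, put `ρ = 1 / r` and `G y w = F y w + ρ ⟪w - y, w - x⟫`. For a convex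
combination `w = ∑ μᵢ yᵢ` of points of `C`, convexity of `F yᵢ` and (A2) give
`∑ μᵢ F yᵢ w ≤ ½ ∑ μᵢ μⱼ (F yᵢ yⱼ + F yⱼ yᵢ) ≤ 0`, while `∑ μᵢ ⟪w - yᵢ, w - x⟫ = 0`; so
`∑ μᵢ G yᵢ w ≤ 0`. By the Fan–Glicksberg–Hoffman alternative and compactness of convex hulls of
finite sets, finitely many of the closed convex sets `{w ∈ C | G y w ≤ 0}` have a common point.
The quadratic term makes them bounded, hence weakly compact, so all of them have a common point
`z`. Minty's argument along `t • y + (1 - t) • z`, `t ↓ 0`, using (A1), (A4) and (A3), turns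
`F y z ≤ ρ ⟪y - z, z - x⟫` for all `y ∈ C` into the claim.
-/

section ConvexAlternative

variable {ι : Type*} [Fintype ι]

theorem IsUpperSet.exists_mem_stdSimplex_forall_sum_mul_pos {U : Set (ι → ℝ)}
    (hU : IsUpperSet U) (hUc : Convex ℝ U) (hUo : IsOpen U) (hUne : U.Nonempty)
    (h0 : (0 : ι → ℝ) ∉ U) : ∃ μ ∈ stdSimplex ℝ ι, ∀ u ∈ U, 0 < ∑ i, μ i * u i := by
  classical
  obtain ⟨f, hf⟩ := geometric_hahn_banach_open_point hUc hUo h0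
  set e : ι → ι → ℝ := fun i j => if i = j then 1 else 0
  set ν : ι → ℝ := fun i => -f (e i)
  have hpos : ∀ u ∈ U, 0 < ∑ i, u i * ν i := fun u hu => by
    have hfu := LinearMap.pi_apply_eq_sum_univ (f : (ι → ℝ) →ₗ[ℝ] ℝ) u
    simp only [ContinuousLinearMap.coe_coe, smul_eq_mul] at hfu
    simpa [ν, e, hfu] using hf u hu
  obtain ⟨u₀, hu₀⟩ := hUne
  have hν : ∀ i, 0 ≤ ν i := by
    intro i
    by_contra! hi
    set t := (∑ j, u₀ j * ν j) / -ν i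
    have ht : 0 ≤ t := div_nonneg (hpos u₀ hu₀).le (neg_nonneg.2 hi.le)
    have hmem : u₀ + t • e i ∈ U :=
      hU (le_add_of_nonneg_right fun j => by
        simp only [e, Pi.smul_apply, Pi.zero_apply, smul_eq_mul]; split_ifs <;> simp [ht]) hu₀
    have hval : ∑ j, (u₀ + t • e i) j * ν j = ∑ j, u₀ j * ν j + t * ν i := by
      simp [e, add_mul, Finset.sum_add_distrib]
    have htν : t * ν i = -∑ j, u₀ j * ν j := by
      simp only [t]
      field_simp [hi.ne]
    exact (hpos _ hmem).ne' (by rw [hval, htν, add_neg_cancel])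
  have hνsum : 0 < ∑ i, ν i := by
    refine (Finset.sum_nonneg fun i _ => hν i).lt_of_ne fun hzero => (hpos u₀ hu₀).ne' ?_
    have := (Finset.sum_eq_zero_iff_of_nonneg fun i _ => hν i).1 hzero.symm
    simp [this]
  refine ⟨fun i => ν i / ∑ j, ν j, ⟨fun i => div_nonneg (hν i) hνsum.le, ?_⟩, fun u hu => ?_⟩
  · rw [← Finset.sum_div, div_self hνsum.ne']
  · have := div_pos (hpos u hu) hνsum
    simpa [Finset.sum_div, mul_div_assoc', mul_comm] using this

variable [Nonempty ι] {E : Type*} [AddCommGroup E] [Module ℝ E]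

/-- The Fan–Glicksberg–Hoffman alternative. -/
theorem exists_mem_stdSimplex_forall_sum_mul_nonneg {K : Set E} {h : ι → E → ℝ}
    (hh : ∀ i, ConvexOn ℝ K (h i)) (hK : ∀ x ∈ K, ∃ i, 0 ≤ h i x) :
    ∃ μ ∈ stdSimplex ℝ ι, ∀ x ∈ K, 0 ≤ ∑ i, μ i * h i x := by
  rcases K.eq_empty_or_nonempty with rfl | ⟨x₀, hx₀⟩
  · classical
    exact ⟨_, single_mem_stdSimplex ℝ (Classical.arbitrary ι), by simp⟩
  have hKc : Convex ℝ K := (hh (Classical.arbitrary ι)).1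
  set U : Set (ι → ℝ) := ⋃ x ∈ K, univ.pi fun i => Ioi (h i x)
  have hU : IsUpperSet U := by
    intro u v huv hu
    simp only [U, mem_iUnion₂, mem_univ_pi, mem_Ioi] at hu ⊢
    obtain ⟨x, hx, hxu⟩ := hu
    exact ⟨x, hx, fun i => (hxu i).trans_le (huv i)⟩
  have hUc : Convex ℝ U := by
    intro u hu v hv a b ha hb hab
    simp only [U, mem_iUnion₂, mem_univ_pi, mem_Ioi] at hu hv ⊢
    obtain ⟨x, hx, hxu⟩ := hu
    obtain ⟨y, hy, hyv⟩ := hv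
    refine ⟨a • x + b • y, hKc hx hy ha hb hab, fun i => ?_⟩
    have hcv := (hh i).2 hx hy ha hb hab
    have hgap := convex_Ioi (0 : ℝ) (sub_pos.2 (hxu i)) (sub_pos.2 (hyv i)) ha hb hab
    simp only [smul_eq_mul, mem_Ioi] at hcv hgap
    simp only [Pi.add_apply, Pi.smul_apply, smul_eq_mul]
    linarith
  have hUo : IsOpen U :=
    isOpen_biUnion fun x _ => isOpen_set_pi finite_univ fun _ _ => isOpen_Ioi
  have hUne : U.Nonempty := ⟨fun i => h i x₀ + 1, mem_biUnion hx₀ (by simp)⟩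
  have h0 : (0 : ι → ℝ) ∉ U := by
    simp only [U, mem_iUnion₂, mem_univ_pi, mem_Ioi, not_exists, not_forall, not_lt,
      Pi.zero_apply]
    exact hK
  obtain ⟨μ, hμ, hμU⟩ := hU.exists_mem_stdSimplex_forall_sum_mul_pos hUc hUo hUne h0
  refine ⟨μ, hμ, fun x hx => le_of_forall_pos_lt_add fun ε hε => ?_⟩
  have := hμU (fun i => h i x + ε) (mem_biUnion hx (by simp [hε]))
  simpa [mul_add, Finset.sum_add_distrib, ← Finset.sum_mul, hμ.2] using this

theorem exists_mem_convexHull_forall_lt {y : ι → E} {h : ι → E → ℝ}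
    (hh : ∀ i, ConvexOn ℝ (convexHull ℝ (range y)) (h i))
    (hsum : ∀ μ ∈ stdSimplex ℝ ι, ∑ i, μ i * h i (∑ j, μ j • y j) ≤ 0) {ε : ℝ} (hε : 0 < ε) :
    ∃ w ∈ convexHull ℝ (range y), ∀ i, h i w < ε := by
  by_contra! hK
  obtain ⟨μ, hμ, hμK⟩ := exists_mem_stdSimplex_forall_sum_mul_nonneg
    (h := fun i w => h i w + -ε) (fun i => (hh i).add_const _)
    fun w hw => (hK w hw).imp fun i hi => by linarith
  have := hμK _ <| (convex_convexHull ℝ _).sum_mem (fun i _ => hμ.1 i) hμ.2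
    fun i _ => subset_convexHull ℝ _ (mem_range_self i)
  simp only [mul_add, Finset.sum_add_distrib, ← Finset.sum_mul, hμ.2] at this
  linarith [hsum μ hμ]

theorem exists_mem_convexHull_forall_nonpos {V : Type*} [NormedAddCommGroup V]
    [NormedSpace ℝ V] {y : ι → V} {h : ι → V → ℝ}
    (hh : ∀ i, ConvexOn ℝ (convexHull ℝ (range y)) (h i))
    (hlsc : ∀ i, LowerSemicontinuousOn (h i) (convexHull ℝ (range y)))
    (hsum : ∀ μ ∈ stdSimplex ℝ ι, ∑ i, μ i * h i (∑ j, μ j • y j) ≤ 0) :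
    ∃ w ∈ convexHull ℝ (range y), ∀ i, h i w ≤ 0 := by
  obtain ⟨w, hwK, hmin⟩ := LowerSemicontinuousOn.exists_isMinOn
    (range_nonempty y).convexHull ((finite_range y).isCompact_convexHull ℝ)
    (lowerSemicontinuousOn_ciSup (fun w _ => (finite_range _).bddAbove) hlsc)
  refine ⟨w, hwK, fun i => ?_⟩
  by_contra! hi
  have hmax : 0 < ⨆ j, h j w :=
    hi.trans_le (le_ciSup (f := fun j => h j w) (finite_range _).bddAbove i)
  obtain ⟨v, hvK, hv⟩ := exists_mem_convexHull_forall_lt hh hsum hmax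
  obtain ⟨j, hj⟩ := exists_eq_ciSup_of_finite (f := fun j => h j v)
  exact (hv j).not_ge (hj ▸ hmin hvK)

end ConvexAlternative

section Bifunction

variable {E : Type*} [AddCommGroup E] [Module ℝ E]

theorem sum_mul_apply_sum_smul_nonpos {ι : Type*} [Fintype ι] {C : Set E} {F : E → E → ℝ}
    (hF2 : ∀ x ∈ C, ∀ y ∈ C, F x y + F y x ≤ 0) (hF4 : ∀ x ∈ C, ConvexOn ℝ C (F x))
    {y : ι → E} (hy : ∀ i, y i ∈ C) {μ : ι → ℝ} (hμ : μ ∈ stdSimplex ℝ ι) :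
    ∑ i, μ i * F (y i) (∑ j, μ j • y j) ≤ 0 := by
  have hjensen : ∀ i, F (y i) (∑ j, μ j • y j) ≤ ∑ j, μ j * F (y i) (y j) := fun i => by
    simpa using (hF4 _ (hy i)).map_sum_le (fun j _ => hμ.1 j) hμ.2 fun j _ => hy j
  have hsymm : 2 * ∑ i, ∑ j, μ i * μ j * F (y i) (y j)
      = ∑ i, ∑ j, μ i * μ j * (F (y i) (y j) + F (y j) (y i)) := by
    rw [two_mul]
    nth_rewrite 2 [Finset.sum_comm]
    simp only [← Finset.sum_add_distrib, mul_add, mul_comm (μ _) (μ _)]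
  have hpairs : ∑ i, ∑ j, μ i * μ j * (F (y i) (y j) + F (y j) (y i)) ≤ 0 :=
    Finset.sum_nonpos fun i _ => Finset.sum_nonpos fun j _ =>
      mul_nonpos_of_nonneg_of_nonpos (mul_nonneg (hμ.1 i) (hμ.1 j)) (hF2 _ (hy i) _ (hy j))
  calc ∑ i, μ i * F (y i) (∑ j, μ j • y j)
      ≤ ∑ i, μ i * ∑ j, μ j * F (y i) (y j) :=
        Finset.sum_le_sum fun i _ => mul_le_mul_of_nonneg_left (hjensen i) (hμ.1 i)
    _ = ∑ i, ∑ j, μ i * μ j * F (y i) (y j) := by simp only [Finset.mul_sum, mul_assoc]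
    _ ≤ 0 := by linarith

theorem ConvexOn.bddBelow_image_segment {s : Set E} {f : E → ℝ} (hf : ConvexOn ℝ s f)
    {a b : E} (ha : a ∈ s) (hb : b ∈ s) : BddBelow (f '' segment ℝ a b) := by
  refine ⟨2 * f ((1 / 2 : ℝ) • a + (1 / 2 : ℝ) • b) - max (f a) (f b), ?_⟩
  rintro _ ⟨_, ⟨p, q, hp, hq, hpq, rfl⟩, rfl⟩
  have hmid : (1 / 2 : ℝ) • a + (1 / 2 : ℝ) • b
      = (1 / 2 : ℝ) • (p • a + q • b) + (1 / 2 : ℝ) • (q • a + p • b) := by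
    obtain rfl : q = 1 - p := by linarith
    module
  have hcv := hf.2 (hf.1 ha hb hp hq hpq) (hf.1 ha hb hq hp (by linarith))
    (by norm_num : (0 : ℝ) ≤ 1 / 2) (by norm_num : (0 : ℝ) ≤ 1 / 2) (by norm_num)
  have hmax := hf.le_on_segment ha hb ⟨q, p, hq, hp, by linarith, rfl⟩
  rw [← hmid] at hcv
  simp only [smul_eq_mul] at hcv
  linarith

theorem minty_equilibrium {C : Set E} {F : E → E → ℝ} (hF1 : ∀ x ∈ C, F x x = 0)
    (hF2 : ∀ x ∈ C, ∀ y ∈ C, F x y + F y x ≤ 0)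
    (hF3 : ∀ x ∈ C, ∀ y ∈ C, ∀ z ∈ C,
      limsup (fun t : ℝ => F (t • z + (1 - t) • x) y) (𝓝[>] 0) ≤ F x y)
    (hF4 : ∀ x ∈ C, ConvexOn ℝ C (F x)) (ℓ : E →ₗ[ℝ] ℝ) {z : E} (hz : z ∈ C)
    (hℓ : ∀ w ∈ C, F w z ≤ ℓ (w - z)) {y : E} (hy : y ∈ C) :
    0 ≤ F z y + ℓ (y - z) := by
  set p : ℝ → E := fun t => t • y + (1 - t) • z
  have hpC : ∀ t ∈ Icc (0 : ℝ) 1, p t ∈ C := fun t ht =>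
    (hF4 z hz).1 hy hz ht.1 (sub_nonneg.2 ht.2) (add_sub_cancel _ _)
  have hlow : ∀ t ∈ Ioc (0 : ℝ) 1, -((1 - t) * ℓ (y - z)) ≤ F (p t) y := by
    rintro t ⟨ht₀, ht₁⟩
    have hp := hpC t ⟨ht₀.le, ht₁⟩
    have hcv := (hF4 _ hp).2 hy hz ht₀.le (sub_nonneg.2 ht₁) (add_sub_cancel _ _)
    have hpz : F (p t) z ≤ t * ℓ (y - z) := by
      have : p t - z = t • (y - z) := by simp only [p]; module
      simpa [this] using hℓ _ hp
    rw [hF1 _ hp, smul_eq_mul, smul_eq_mul] at hcv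
    have : 0 ≤ t * (F (p t) y + (1 - t) * ℓ (y - z)) := by nlinarith
    linarith [(mul_nonneg_iff_of_pos_left ht₀).1 this]
  obtain ⟨m, hm⟩ := (hF4 y hy).bddBelow_image_segment hy hz
  have hup : ∀ t ∈ Icc (0 : ℝ) 1, F (p t) y ≤ -m := fun t ht => by
    have := hm ⟨p t, ⟨t, 1 - t, ht.1, sub_nonneg.2 ht.2, add_sub_cancel _ _, rfl⟩, rfl⟩
    linarith [hF2 _ (hpC t ht) y hy]
  have hev : ∀ᶠ t in 𝓝[>] (0 : ℝ), t ∈ Ioc (0 : ℝ) 1 := Ioc_mem_nhdsGT zero_lt_one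
  have htend : Tendsto (fun t : ℝ => -((1 - t) * ℓ (y - z))) (𝓝[>] 0) (𝓝 (-ℓ (y - z))) := by
    have : Continuous fun t : ℝ => -((1 - t) * ℓ (y - z)) := by fun_prop
    simpa using (this.tendsto 0).mono_left nhdsWithin_le_nhds
  -- without this bound the `limsup` in (A3) would be a junk value
  have hbdd : IsBoundedUnder (· ≤ ·) (𝓝[>] (0 : ℝ)) fun t => F (p t) y :=
    ⟨-m, eventually_map.2 (hev.mono fun t ht => hup t (Ioc_subset_Icc_self ht))⟩
  have := calc -ℓ (y - z) = limsup (fun t : ℝ => -((1 - t) * ℓ (y - z))) (𝓝[>] 0) :=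
        htend.limsup_eq.symm
    _ ≤ limsup (fun t => F (p t) y) (𝓝[>] 0) :=
        limsup_le_limsup (hev.mono hlow) htend.isCoboundedUnder_le hbdd
    _ ≤ F z y := hF3 z hz y hy y hy
  linarith

end Bifunction

theorem ConvexOn.exists_sub_mul_norm_le {E : Type*} [SeminormedAddCommGroup E]
    [NormedSpace ℝ E] {s : Set E} {f : E → ℝ} (hf : ConvexOn ℝ s f) {a : E} (ha : a ∈ s)
    (hfa : LowerSemicontinuousWithinAt f s a) :
    ∃ K, 0 ≤ K ∧ ∀ w ∈ s, f a - 1 - K * ‖w - a‖ ≤ f w := by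
  obtain ⟨δ, hδ, hball⟩ := Metric.mem_nhdsWithin_iff.1 (hfa (f a - 1) (by linarith))
  refine ⟨δ⁻¹, inv_nonneg.2 hδ.le, fun w hw => ?_⟩
  set d := ‖w - a‖
  -- the point of `[a, w]` at distance `δ d / (δ + d) < δ` from `a`
  set θ := δ / (δ + d)
  have hd : 0 ≤ d := norm_nonneg _
  have hθ : 0 < θ := div_pos hδ (by positivity)
  have hθ₁ : θ ≤ 1 := div_le_one_of_le₀ (by linarith) (by positivity)
  have hθd : θ * (δ + d) = δ := div_mul_cancel₀ _ (by positivity)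
  have hu : θ • w + (1 - θ) • a ∈ s :=
    hf.1 hw ha hθ.le (sub_nonneg.2 hθ₁) (add_sub_cancel _ _)
  have hdist : θ • w + (1 - θ) • a ∈ Metric.ball a δ := by
    rw [Metric.mem_ball, dist_eq_norm,
      show θ • w + (1 - θ) • a - a = θ • (w - a) by module, norm_smul, Real.norm_of_nonneg hθ.le]
    nlinarith
  have hlt : f a - 1 < f (θ • w + (1 - θ) • a) := hball ⟨hdist, hu⟩
  have hcv := hf.2 hw ha hθ.le (sub_nonneg.2 hθ₁) (add_sub_cancel _ _)
  simp only [smul_eq_mul] at hcv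
  have : δ * (f a - 1 - δ⁻¹ * d) ≤ δ * f w := by
    rw [mul_sub, mul_sub, ← mul_assoc, mul_inv_cancel₀ hδ.ne']
    nlinarith
  exact le_of_mul_le_mul_left this hδ

theorem LowerSemicontinuousOn.isClosed_sep_le {X : Type*} [TopologicalSpace X] {s : Set X}
    {f : X → ℝ} (hf : LowerSemicontinuousOn f s) (hs : IsClosed s) (c : ℝ) :
    IsClosed {x ∈ s | f x ≤ c} := by
  obtain ⟨v, hv, hsv⟩ := lowerSemicontinuousOn_iff_preimage_Iic.1 hf c
  exact (hsv ▸ hs.inter hv : IsClosed (s ∩ f ⁻¹' Iic c))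

theorem Convex.isClosed_toWeakSpace_image {E : Type*} [NormedAddCommGroup E]
    [NormedSpace ℝ E] {s : Set E} (hs : Convex ℝ s) (hsc : IsClosed s) :
    IsClosed (toWeakSpace ℝ E '' s) := by
  rw [← closure_eq_iff_isClosed, ← hs.toWeakSpace_closure ℝ, hsc.closure_eq]

section Hilbert

variable {H : Type*} [NormedAddCommGroup H] [InnerProductSpace ℝ H]

theorem InnerProductSpace.surjective_inclusionInDoubleDualWeak [CompleteSpace H] :
    Function.Surjective (NormedSpace.inclusionInDoubleDualWeak ℝ H) := by
  intro φ
  let ψ : StrongDual ℝ H :=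
    { toFun := fun w => φ (InnerProductSpace.toDual ℝ H w)
      map_add' := fun v w => by simp
      map_smul' := fun c w => by simp
      cont := (WeakDual.toStrongDual φ).continuous.comp
        (InnerProductSpace.toDual ℝ H).continuous }
  refine ⟨toWeakSpace ℝ H ((InnerProductSpace.toDual ℝ H).symm ψ),
    DFunLike.ext _ _ fun f => ?_⟩
  obtain ⟨v, rfl⟩ := (InnerProductSpace.toDual ℝ H).surjective f
  show ⟪v, (InnerProductSpace.toDual ℝ H).symm ψ⟫ = _
  rw [real_inner_comm, InnerProductSpace.toDual_symm_apply]
  rfl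

theorem Convex.isCompact_toWeakSpace_image [CompleteSpace H] {s : Set H} (hs : Convex ℝ s)
    (hsc : IsClosed s) (hsb : IsBounded s) : IsCompact (toWeakSpace ℝ H '' s) := by
  rw [← (hs.isClosed_toWeakSpace_image hsc).closure_eq]
  refine NormedSpace.isCompact_closure_of_isBounded ℝ H _ ?_ ?_
  · rwa [preimage_image_eq _ (toWeakSpace ℝ H).injective]
  · rw [InnerProductSpace.surjective_inclusionInDoubleDualWeak.range_eq]
    exact subset_univ _

theorem Convex.inter_iInter_nonempty_of_isBounded [CompleteSpace H] {ι : Type*} {s : Set H}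
    (hs : Convex ℝ s) (hsc : IsClosed s) (hsb : IsBounded s) (t : ι → Set H)
    (ht : ∀ i, Convex ℝ (t i)) (htc : ∀ i, IsClosed (t i))
    (hst : ∀ u : Finset ι, (s ∩ ⋂ i ∈ u, t i).Nonempty) : (s ∩ ⋂ i, t i).Nonempty := by
  set e := toWeakSpace ℝ H
  obtain ⟨_, ⟨w, hws, rfl⟩, hw⟩ :=
    (hs.isCompact_toWeakSpace_image hsc hsb).inter_iInter_nonempty
      (fun i => e '' t i) (fun i => (ht i).isClosed_toWeakSpace_image (htc i)) fun u => by
        obtain ⟨w, hws, hwt⟩ := hst u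
        exact ⟨e w, mem_image_of_mem e hws,
          mem_iInter₂.2 fun i hi => mem_image_of_mem e (mem_iInter₂.1 hwt i hi)⟩
  exact ⟨w, hws, mem_iInter.2 fun i => e.injective.mem_set_image.1 (mem_iInter.1 hw i)⟩

theorem convexOn_inner_sub_sub (x y : H) : ConvexOn ℝ univ fun w => ⟪w - y, w - x⟫ := by
  refine ⟨convex_univ, fun a _ b _ s t hs ht hst => ?_⟩
  obtain rfl : t = 1 - s := by linarith
  have hab : 0 ≤ ⟪a - b, a - b⟫ := real_inner_self_nonneg
  simp only [smul_eq_mul, inner_sub_left, inner_sub_right, inner_add_left, inner_add_right,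
    real_inner_smul_left, real_inner_smul_right, real_inner_comm a b] at hab ⊢
  nlinarith [mul_nonneg (mul_nonneg hs ht) hab]

variable {C : Set H} {F : H → H → ℝ} {ρ : ℝ} {x y : H}

def kkmSet (C : Set H) (F : H → H → ℝ) (ρ : ℝ) (x y : H) : Set H :=
  {w ∈ C | F y w + ρ * ⟪w - y, w - x⟫ ≤ 0}

theorem convexOn_add_mul_inner (hF : ConvexOn ℝ C (F y)) (hρ : 0 ≤ ρ) :
    ConvexOn ℝ C fun w => F y w + ρ * ⟪w - y, w - x⟫ :=
  hF.add (((convexOn_inner_sub_sub x y).subset (subset_univ C) hF.1).smul hρ)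

theorem lowerSemicontinuousOn_add_mul_inner (hF : LowerSemicontinuousOn (F y) C) :
    LowerSemicontinuousOn (fun w => F y w + ρ * ⟪w - y, w - x⟫) C :=
  hF.add (Continuous.continuousOn (by fun_prop)).lowerSemicontinuousOn

theorem isClosed_kkmSet (hC : IsClosed C) (hF : LowerSemicontinuousOn (F y) C) :
    IsClosed (kkmSet C F ρ x y) :=
  (lowerSemicontinuousOn_add_mul_inner hF).isClosed_sep_le hC 0

theorem convex_kkmSet (hF : ConvexOn ℝ C (F y)) (hρ : 0 ≤ ρ) : Convex ℝ (kkmSet C F ρ x y) :=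
  (convexOn_add_mul_inner hF hρ).convex_le 0

theorem isBounded_kkmSet (hy : y ∈ C) (hF : ConvexOn ℝ C (F y))
    (hFl : LowerSemicontinuousOn (F y) C) (hρ : 0 < ρ) : IsBounded (kkmSet C F ρ x y) := by
  obtain ⟨K, hK, hFK⟩ := hF.exists_sub_mul_norm_le hy (hFl y hy)
  rw [Metric.isBounded_iff_subset_closedBall y]
  set c := |F y y - 1|
  refine ⟨1 + (K + ρ * ‖y - x‖ + c) / ρ, fun w ⟨hwC, hw⟩ => ?_⟩
  rw [Metric.mem_closedBall, dist_eq_norm]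
  set d := ‖w - y‖
  have hinner : d * d - d * ‖y - x‖ ≤ ⟪w - y, w - x⟫ := by
    have : ⟪w - y, w - x⟫ = ⟪w - y, w - y⟫ + ⟪w - y, y - x⟫ := by
      rw [← inner_add_right, sub_add_sub_cancel]
    rw [this, real_inner_self_eq_norm_mul_norm]
    linarith [neg_abs_le ⟪w - y, y - x⟫, abs_real_inner_le_norm (w - y) (y - x)]
  have hquad : ρ * (d * d) ≤ (K + ρ * ‖y - x‖) * d + c := by
    nlinarith [hFK w hwC, neg_abs_le (F y y - 1), mul_le_mul_of_nonneg_left hinner hρ.le]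
  have he : 0 ≤ ‖y - x‖ := norm_nonneg _
  have hc : 0 ≤ c := abs_nonneg _
  rw [← sub_le_iff_le_add', le_div_iff₀ hρ]
  rcases le_or_gt d 1 with hd | hd
  · nlinarith
  · nlinarith

theorem exists_forall_mem_kkmSet {ι : Type*} [Fintype ι] [Nonempty ι]
    (hF2 : ∀ x ∈ C, ∀ y ∈ C, F x y + F y x ≤ 0)
    (hF4 : ∀ x ∈ C, ConvexOn ℝ C (F x) ∧ LowerSemicontinuousOn (F x) C) (hρ : 0 ≤ ρ)
    {y : ι → H} (hy : ∀ i, y i ∈ C) : ∃ w, ∀ i, w ∈ kkmSet C F ρ x (y i) := by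
  have hsub : convexHull ℝ (range y) ⊆ C :=
    convexHull_min (range_subset_iff.2 hy) (hF4 _ (hy (Classical.arbitrary ι))).1.1
  obtain ⟨w, hw, hwy⟩ := exists_mem_convexHull_forall_nonpos
    (h := fun i w => F (y i) w + ρ * ⟪w - y i, w - x⟫)
    (fun i => (convexOn_add_mul_inner (hF4 _ (hy i)).1 hρ).subset hsub (convex_convexHull ℝ _))
    (fun i => (lowerSemicontinuousOn_add_mul_inner (hF4 _ (hy i)).2).mono hsub)
    fun μ hμ => by
      set v := ∑ j, μ j • y j
      have hcenter : ∑ i, μ i * ⟪v - y i, v - x⟫ = 0 := by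
        simp only [← real_inner_smul_left, ← sum_inner, smul_sub, Finset.sum_sub_distrib,
          ← Finset.sum_smul, hμ.2, one_smul, v, sub_self, inner_zero_left]
      simp only [mul_add, Finset.sum_add_distrib, mul_left_comm (μ _) ρ, ← Finset.mul_sum,
        hcenter, mul_zero, add_zero]
      exact sum_mul_apply_sum_smul_nonpos hF2 (fun z hz => (hF4 z hz).1) hy hμ
  exact ⟨w, fun i => ⟨hsub hw, hwy i⟩⟩

theorem add_mul_inner_nonneg_of_forall_mem_kkmSet (hF1 : ∀ x ∈ C, F x x = 0)
    (hF2 : ∀ x ∈ C, ∀ y ∈ C, F x y + F y x ≤ 0)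
    (hF3 : ∀ x ∈ C, ∀ y ∈ C, ∀ z ∈ C,
      limsup (fun t : ℝ => F (t • z + (1 - t) • x) y) (𝓝[>] 0) ≤ F x y)
    (hF4 : ∀ x ∈ C, ConvexOn ℝ C (F x)) {z : H} (hz : z ∈ C)
    (hzC : ∀ y ∈ C, z ∈ kkmSet C F ρ x y) (hy : y ∈ C) :
    0 ≤ F z y + ρ * ⟪y - z, z - x⟫ := by
  refine minty_equilibrium hF1 hF2 hF3 hF4 (ρ • (innerₗ H).flip (z - x)) hz (fun w hw => ?_) hy
  have := (hzC w hw).2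
  rw [← neg_sub w z, inner_neg_left, mul_neg] at this
  simp only [LinearMap.smul_apply, LinearMap.flip_apply, innerₗ_apply_apply, smul_eq_mul]
  linarith

end Hilbert

theorem stmt_6_general {H : Type*} [NormedAddCommGroup H] [InnerProductSpace ℝ H]
    [CompleteSpace H]
    (C : Set H) (hCne : C.Nonempty) (hCcl : IsClosed C)
    (F : H → H → ℝ)
    (hF1 : ∀ x ∈ C, F x x = 0)
    (hF2 : ∀ x ∈ C, ∀ y ∈ C, F x y + F y x ≤ 0)
    (hF3 : ∀ x ∈ C, ∀ y ∈ C, ∀ z ∈ C,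
      limsup (fun t : ℝ => F (t • z + (1 - t) • x) y) (𝓝[>] 0) ≤ F x y)
    (hF4 : ∀ x ∈ C, ConvexOn ℝ C (fun y => F x y)
      ∧ LowerSemicontinuousOn (fun y => F x y) C) :
    ∀ r : ℝ, 0 < r → ∀ x : H,
      ∃ z ∈ C, ∀ y ∈ C, 0 ≤ F z y + (1 / r) * ⟪y - z, z - x⟫ := by
  intro r hr x
  obtain ⟨y₀, hy₀⟩ := hCne
  have hρ : 0 < 1 / r := one_div_pos.2 hr
  obtain ⟨z, hz₀, hz⟩ := (convex_kkmSet (hF4 y₀ hy₀).1 hρ.le).inter_iInter_nonempty_of_isBounded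
    (isClosed_kkmSet hCcl (hF4 y₀ hy₀).2) (isBounded_kkmSet hy₀ (hF4 y₀ hy₀).1 (hF4 y₀ hy₀).2 hρ)
    (fun y : C => kkmSet C F (1 / r) x y) (fun y => convex_kkmSet (hF4 y y.2).1 hρ.le)
    (fun y => isClosed_kkmSet hCcl (hF4 y y.2).2) fun u => by
      obtain ⟨w, hw⟩ := exists_forall_mem_kkmSet hF2 hF4 hρ.le
        (y := fun i : Option u => i.elim y₀ fun j => j.1.1) fun i => by cases i <;> simp [hy₀]
      exact ⟨w, hw none, mem_iInter₂.2 fun j hj => hw (some ⟨j, hj⟩)⟩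
  exact ⟨z, hz₀.1, fun y hy => add_mul_inner_nonneg_of_forall_mem_kkmSet hF1 hF2 hF3
    (fun x hx => (hF4 x hx).1) hz₀.1 (fun y hy => mem_iInter.1 hz ⟨y, hy⟩) hy⟩

/-- **Existence for the equilibrium resolvent.** If `F : C × C → ℝ` satisfies
(A1)–(A4), then for every `r > 0` and `x ∈ H` there is `z ∈ C` with
`F z y + (1/r) ⟪y - z, z - x⟫ ≥ 0` for all `y ∈ C`. -/
theorem stmt_6 {H : Type*} [NormedAddCommGroup H] [InnerProductSpace ℝ H]
    [CompleteSpace H]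
    (C : Set H) (hCne : C.Nonempty) (hCcl : IsClosed C) (hCcv : Convex ℝ C)
    (F : H → H → ℝ)
    (hF1 : ∀ x ∈ C, F x x = 0)
    (hF2 : ∀ x ∈ C, ∀ y ∈ C, F x y + F y x ≤ 0)
    (hF3 : ∀ x ∈ C, ∀ y ∈ C, ∀ z ∈ C,
      limsup (fun t : ℝ => F (t • z + (1 - t) • x) y) (𝓝[>] 0) ≤ F x y)
    (hF4 : ∀ x ∈ C, ConvexOn ℝ C (fun y => F x y)
      ∧ LowerSemicontinuousOn (fun y => F x y) C) :
    ∀ r : ℝ, 0 < r → ∀ x : H,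
      ∃ z ∈ C, ∀ y ∈ C, 0 ≤ F z y + (1 / r) * ⟪y - z, z - x⟫ :=
  stmt_6_general C hCne hCcl F hF1 hF2 hF3 hF4
end

section
/- Let C be a nonempty closed convex subset of a real Hilbert space H, let F : C × C → ℝ satisfy (A1)–(A4), and let r > 0. Then the resolvent T_r : H → C is firmly nonexpansive: for all x, y ∈ H, ‖T_r x − T_r y‖² ≤ ⟨T_r x − T_r y, x − y⟩. -/
open Filter Topology
open scoped RealInnerProductSpace

/-! Adding the two resolvent inequalities for `u = T_r x` and `v = T_r y`, each tested at the other
point, the monotonicity (A2) cancels the `F`-terms and leaves `⟪u - v, (x - u) - (y - v)⟫ ≥ 0`,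
which is firm nonexpansivity rearranged. -/

section
variable {H : Type*} [NormedAddCommGroup H] [InnerProductSpace ℝ H]

theorem norm_sub_sq_le_inner_of_inner_nonneg {u v x y : H}
    (h : 0 ≤ ⟪u - v, (x - u) - (y - v)⟫) : ‖u - v‖ ^ 2 ≤ ⟪u - v, x - y⟫ := by
  rw [show (x - u) - (y - v) = (x - y) - (u - v) by abel, inner_sub_right,
    real_inner_self_eq_norm_sq] at h
  linarith

theorem inner_sub_sub_nonneg_of_resolvent {F : H → H → ℝ} {r : ℝ} (hr : 0 < r) {u v x y : H}
    (hmono : F u v + F v u ≤ 0)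
    (hu : 0 ≤ F u v + (1 / r) * ⟪v - u, u - x⟫)
    (hv : 0 ≤ F v u + (1 / r) * ⟪u - v, v - y⟫) :
    0 ≤ ⟪u - v, (x - u) - (y - v)⟫ := by
  have hsum : ⟪v - u, u - x⟫ + ⟪u - v, v - y⟫ = ⟪u - v, (x - u) - (y - v)⟫ := by
    rw [← neg_sub u v, ← neg_sub x u, inner_neg_neg, ← inner_add_right]
    congr 1
    abel
  have hscaled : 0 ≤ (1 / r) * ⟪u - v, (x - u) - (y - v)⟫ := by
    rw [← hsum]
    linarith
  exact nonneg_of_mul_nonneg_right hscaled (by positivity)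

end

theorem stmt_8_general {H : Type*} [NormedAddCommGroup H] [InnerProductSpace ℝ H]
    (C : Set H)
    (F : H → H → ℝ)
    (hF2 : ∀ x ∈ C, ∀ y ∈ C, F x y + F y x ≤ 0)
    (r : ℝ) (hr : 0 < r)
    (Tr : H → H)
    (hTr : ∀ x : H, Tr x ∈ C ∧ ∀ y ∈ C, 0 ≤ F (Tr x) y + (1 / r) * ⟪y - Tr x, Tr x - x⟫) :
    ∀ x y : H, ‖Tr x - Tr y‖ ^ 2 ≤ ⟪Tr x - Tr y, x - y⟫ := by
  intro x y
  obtain ⟨hxC, hx⟩ := hTr x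
  obtain ⟨hyC, hy⟩ := hTr y
  exact norm_sub_sq_le_inner_of_inner_nonneg <|
    inner_sub_sub_nonneg_of_resolvent hr (hF2 _ hxC _ hyC) (hx _ hyC) (hy _ hxC)

/-- **Firm nonexpansivity of the equilibrium resolvent.** If `F : C × C → ℝ`
satisfies (A1)–(A4), `r > 0`, and `Tr : H → C` is the resolvent of `F` of
parameter `r`, then `‖Tr x - Tr y‖² ≤ ⟪Tr x - Tr y, x - y⟫` for all
`x, y ∈ H`. -/
theorem stmt_8 {H : Type*} [NormedAddCommGroup H] [InnerProductSpace ℝ H]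
    [CompleteSpace H]
    (C : Set H) (hCne : C.Nonempty) (hCcl : IsClosed C) (hCcv : Convex ℝ C)
    (F : H → H → ℝ)
    (hF1 : ∀ x ∈ C, F x x = 0)
    (hF2 : ∀ x ∈ C, ∀ y ∈ C, F x y + F y x ≤ 0)
    (hF3 : ∀ x ∈ C, ∀ y ∈ C, ∀ z ∈ C,
      limsup (fun t : ℝ => F (t • z + (1 - t) • x) y) (𝓝[>] 0) ≤ F x y)
    (hF4 : ∀ x ∈ C, ConvexOn ℝ C (fun y => F x y)
      ∧ LowerSemicontinuousOn (fun y => F x y) C)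
    (r : ℝ) (hr : 0 < r)
    (Tr : H → H)
    (hTr : ∀ x : H, Tr x ∈ C ∧ ∀ y ∈ C, 0 ≤ F (Tr x) y + (1 / r) * ⟪y - Tr x, Tr x - x⟫) :
    ∀ x y : H, ‖Tr x - Tr y‖ ^ 2 ≤ ⟪Tr x - Tr y, x - y⟫ :=
  stmt_8_general C F hF2 r hr Tr hTr
end

section
/- Let C be a nonempty closed convex subset of a real Hilbert space H, let F : C × C → ℝ satisfy (A1)–(A4), and let r > 0. Then the fixed point set of the resolvent T_r equals EP(F), i.e. Fix(T_r) = {x ∈ C : F(x,y) ≥ 0 for all y ∈ C}, and moreover EP(F) is a closed convex subset of C. -/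
open Filter Topology
open scoped RealInnerProductSpace

/-- If `F : C × C → ℝ` satisfies (A1)–(A4), `r > 0`, and `Tr : H → C` is the
resolvent of `F` of parameter `r`, then `Fix(Tr) = EP(F)` and `EP(F)` is
closed and convex. -/
theorem stmt_9 {H : Type*} [NormedAddCommGroup H] [InnerProductSpace ℝ H]
    [CompleteSpace H]
    (C : Set H) (hCne : C.Nonempty) (hCcl : IsClosed C) (hCcv : Convex ℝ C)
    (F : H → H → ℝ)
    (hF1 : ∀ x ∈ C, F x x = 0)
    (hF2 : ∀ x ∈ C, ∀ y ∈ C, F x y + F y x ≤ 0)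
    (hF3 : ∀ x ∈ C, ∀ y ∈ C, ∀ z ∈ C,
      limsup (fun t : ℝ => F (t • z + (1 - t) • x) y) (𝓝[>] 0) ≤ F x y)
    (hF4 : ∀ x ∈ C, ConvexOn ℝ C (fun y => F x y)
      ∧ LowerSemicontinuousOn (fun y => F x y) C)
    (r : ℝ) (hr : 0 < r)
    (Tr : H → H)
    (hTr : ∀ x : H, Tr x ∈ C ∧ ∀ y ∈ C, 0 ≤ F (Tr x) y + (1 / r) * ⟪y - Tr x, Tr x - x⟫) :
    {x : H | Tr x = x} = {x : H | x ∈ C ∧ ∀ y ∈ C, 0 ≤ F x y} ∧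
    IsClosed {x : H | x ∈ C ∧ ∀ y ∈ C, 0 ≤ F x y} ∧
    Convex ℝ {x : H | x ∈ C ∧ ∀ y ∈ C, 0 ≤ F x y} := by
  -- Minty-type converse: if F y x ≤ 0 for all y ∈ C, then x ∈ EP(F).
  have minty : ∀ x ∈ C, (∀ y ∈ C, F y x ≤ 0) → ∀ y ∈ C, 0 ≤ F x y := by
    intro x hx hneg y hy
    have key : ∀ t ∈ Set.Ioc (0:ℝ) 1, 0 ≤ F (t • y + (1 - t) • x) y := by
      intro t ht
      set z := t • y + (1 - t) • x with hzdef
      have hz : z ∈ C := hCcv hy hx ht.1.le (by linarith [ht.2]) (by ring)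
      have hconv := (hF4 z hz).1.2 hy hx ht.1.le
        (show (0:ℝ) ≤ 1 - t by linarith [ht.2]) (by ring)
      simp only [smul_eq_mul, ← hzdef, hF1 z hz] at hconv
      have hzx : F z x ≤ 0 := hneg z hz
      have h1t : (1 - t) * F z x ≤ 0 :=
        mul_nonpos_of_nonneg_of_nonpos (by linarith [ht.2]) hzx
      nlinarith [ht.1, mul_pos ht.1 (by linarith : (0:ℝ) < 1)]
    have hlim : (0:ℝ) ≤ limsup (fun t : ℝ => F (t • y + (1 - t) • x) y) (𝓝[>] 0) := by
      rw [limsup_eq]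
      apply Real.sInf_nonneg
      intro a ha
      simp only [Set.mem_setOf_eq] at ha
      have hmem : Set.Ioc (0:ℝ) 1 ∈ 𝓝[>] (0:ℝ) := Ioc_mem_nhdsGT_of_mem (by norm_num)
      have : ∀ᶠ t in 𝓝[>] (0:ℝ), 0 ≤ F (t • y + (1 - t) • x) y ∧
          F (t • y + (1 - t) • x) y ≤ a := by
        filter_upwards [ha, hmem] with t ht1 ht2
        exact ⟨key t ht2, ht1⟩
      obtain ⟨t, ht1, ht2⟩ := this.exists
      linarith
    exact le_trans hlim (hF3 x hx y hy y hy)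
  -- Forward direction of Minty via monotonicity (A2)
  have minty' : ∀ x ∈ C, (∀ y ∈ C, 0 ≤ F x y) → ∀ y ∈ C, F y x ≤ 0 := by
    intro x hx hep y hy
    have := hF2 x hx y hy
    have := hep y hy
    linarith
  -- fixed point set equality
  have hfix : {x : H | Tr x = x} = {x : H | x ∈ C ∧ ∀ y ∈ C, 0 ≤ F x y} := by
    ext x
    simp only [Set.mem_setOf_eq]
    constructor
    · intro hxfix
      have hxC : x ∈ C := hxfix ▸ (hTr x).1
      refine ⟨hxC, fun y hy => ?_⟩
      have h := (hTr x).2 y hy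
      rw [hxfix] at h
      simpa using h
    · rintro ⟨hxC, hep⟩
      set z := Tr x with hz
      have hzC : z ∈ C := (hTr x).1
      have h1 := (hTr x).2 x hxC
      have h2 : F z x ≤ 0 := minty' x hxC hep z hzC
      have h3 : ⟪x - z, z - x⟫ = -‖x - z‖ ^ 2 := by
        have : z - x = -(x - z) := by abel
        rw [this, inner_neg_right, real_inner_self_eq_norm_sq]
      rw [h3] at h1
      have h4 : ‖x - z‖ ^ 2 ≤ 0 := by
        have hrinv : 0 < 1 / r := by positivity
        nlinarith
      have h5 : x - z = 0 := by
        have := sq_nonneg ‖x - z‖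
        have : ‖x - z‖ = 0 := by nlinarith
        simpa using this
      have : x = z := by
        have := sub_eq_zero.mp h5
        exact this
      exact this.symm
  refine ⟨hfix, ?_, ?_⟩
  · -- closedness
    have hset : {x : H | x ∈ C ∧ ∀ y ∈ C, 0 ≤ F x y}
        = {x : H | x ∈ C ∧ ∀ y ∈ C, F y x ≤ 0} := by
      ext x
      simp only [Set.mem_setOf_eq]
      exact ⟨fun ⟨h1, h2⟩ => ⟨h1, minty' x h1 h2⟩, fun ⟨h1, h2⟩ => ⟨h1, minty x h1 h2⟩⟩
    rw [hset]
    set S := {x : H | x ∈ C ∧ ∀ y ∈ C, F y x ≤ 0} with hS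
    rw [isClosed_iff_clusterPt]
    intro x hx
    have hxcl : x ∈ closure S := mem_closure_iff_clusterPt.mpr hx
    have hSC : S ⊆ C := fun z hz => hz.1
    have hxC : x ∈ C := hCcl.closure_subset (closure_mono hSC hxcl)
    refine ⟨hxC, fun y hy => ?_⟩
    by_contra hcon
    push_neg at hcon
    have hlsc := (hF4 y hy).2 x hxC 0 hcon
    have hne : (𝓝[S] x).NeBot := mem_closure_iff_nhdsWithin_neBot.mp hxcl
    have hle : 𝓝[S] x ≤ 𝓝[C] x := nhdsWithin_mono x hSC
    have h1 : ∀ᶠ z in 𝓝[S] x, 0 < F y z := hle hlsc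
    have h2 : ∀ᶠ z in 𝓝[S] x, F y z ≤ 0 := by
      filter_upwards [self_mem_nhdsWithin] with z hz
      exact hz.2 y hy
    obtain ⟨z, hz1, hz2⟩ := (h1.and h2).exists
    linarith
  · -- convexity
    intro x₁ hx₁ x₂ hx₂ a b ha hb hab
    have hxC : a • x₁ + b • x₂ ∈ C := hCcv hx₁.1 hx₂.1 ha hb hab
    refine ⟨hxC, minty _ hxC fun y hy => ?_⟩
    have h1 : F y x₁ ≤ 0 := minty' x₁ hx₁.1 hx₁.2 y hy
    have h2 : F y x₂ ≤ 0 := minty' x₂ hx₂.1 hx₂.2 y hy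
    have hconv := (hF4 y hy).1.2 hx₁.1 hx₂.1 ha hb hab
    simp only [smul_eq_mul] at hconv
    nlinarith
end

section
/- Let C be a nonempty closed convex subset of a real Hilbert space H, let (T_i)_{i≥1} be a family of nonexpansive mappings T_i : C → C with ⋂_{i=1}^∞ Fix(T_i) ≠ ∅, and let (μ_i) be reals with 0 < μ_i ≤ μ < 1 for all i ≥ 1. Then for each n ≥ 1 the W-mapping W_n is nonexpansive and Fix(W_n) = ⋂_{i=1}^n Fix(T_i). -/
/-- The mappings `U n k` of Shimoji–Takahashi: `U n k = I` for `k ≥ n+1` and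
`U n k = μ k • T k ∘ U n (k+1) + (1 - μ k) • I` for `k ≤ n`. -/
noncomputable def Umap {H : Type*} [AddCommGroup H] [Module ℝ H]
    (T : ℕ → H → H) (μ : ℕ → ℝ) (n k : ℕ) (x : H) : H :=
  if n + 1 ≤ k then x
  else μ k • T k (Umap T μ n (k + 1) x) + (1 - μ k) • x
termination_by n + 1 - k
decreasing_by omega

/-- The `W`-mapping `W n = U n 1` generated by `T 1, T 2, …` and `μ 1, μ 2, …`. -/
noncomputable def Wmap {H : Type*} [AddCommGroup H] [Module ℝ H]
    (T : ℕ → H → H) (μ : ℕ → ℝ) (n : ℕ) (x : H) : H :=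
  Umap T μ n 1 x

/-!
For `k ≤ n`, `U n k` is the averaged map `μ k • (T k ∘ U n (k+1)) + (1 - μ k) • id`. Averaging
preserves both mapping a convex set into itself and nonexpansiveness, so every `U n k` is
nonexpansive on `C`. As `μ k ≠ 0`, `U n k` has the same fixed points as `T k ∘ U n (k+1)`.
Let `z` be a common fixed point and `T k (U n (k+1) x) = x`. Then
`‖x - z‖ ≤ ‖U n (k+1) x - z‖ ≤ ‖x - z‖`, and since `U n (k+1) x - z` is a proper convex
combination of two vectors of norm at most `‖x - z‖`, strict convexity of the norm gives
`U n (k+1) x = x`. Hence `T k x = x` and `x` is fixed by `U n (k+1)`, so a descending induction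
on `k` yields `Fix (U n k) = ⋂_{k ≤ i ≤ n} Fix (T i)`.
-/

open Set Function

noncomputable def averagedMap {E : Type*} [AddCommGroup E] [Module ℝ E]
    (μ : ℝ) (f : E → E) (x : E) : E :=
  μ • f x + (1 - μ) • x

theorem Nat.decreasing_induction_above {n : ℕ} {P : ℕ → Prop} (k : ℕ)
    (of_lt : ∀ k, n < k → P k) (of_le : ∀ k ≤ n, P (k + 1) → P k) : P k := by
  by_cases hk : n < k
  · exact of_lt k hk
  · exact of_le k (by omega) (Nat.decreasing_induction_above (k + 1) of_lt of_le)
termination_by n + 1 - k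

section Averaged

variable {E : Type*} [AddCommGroup E] [Module ℝ E] {μ : ℝ} {f : E → E} {x : E} {C : Set E}

theorem Function.IsFixedPt.averagedMap (h : IsFixedPt f x) :
    IsFixedPt (_root_.averagedMap μ f) x := by
  unfold IsFixedPt _root_.averagedMap
  rw [h.eq]
  module

theorem isFixedPt_averagedMap_iff (hμ : μ ≠ 0) :
    IsFixedPt (averagedMap μ f) x ↔ IsFixedPt f x := by
  have : averagedMap μ f x - x = μ • (f x - x) := by unfold averagedMap; module
  rw [IsFixedPt, IsFixedPt, ← sub_eq_zero, this, smul_eq_zero, sub_eq_zero, or_iff_right hμ]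

theorem Convex.mapsTo_averagedMap (hC : Convex ℝ C) (hf : MapsTo f C C) (hμ : μ ∈ Icc 0 1) :
    MapsTo (averagedMap μ f) C C :=
  fun _ hx => hC (hf hx) hx hμ.1 (sub_nonneg.2 hμ.2) (add_sub_cancel μ 1)

end Averaged

section NormedAveraged

variable {E : Type*} [NormedAddCommGroup E] {μ : ℝ} {f : E → E} {x z : E} {C : Set E}

theorem LipschitzOnWith.norm_sub_le_of_isFixedPt (hf : LipschitzOnWith 1 f C) (hx : x ∈ C)
    (hz : z ∈ C) (hfz : IsFixedPt f z) : ‖f x - z‖ ≤ ‖x - z‖ := by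
  simpa [hfz.eq] using lipschitzOnWith_iff_norm_sub_le.1 hf hx hz

variable [NormedSpace ℝ E]

theorem LipschitzOnWith.averagedMap (hf : LipschitzOnWith 1 f C) (hμ : μ ∈ Icc 0 1) :
    LipschitzOnWith 1 (_root_.averagedMap μ f) C := by
  simp only [lipschitzOnWith_iff_norm_sub_le, NNReal.coe_one, one_mul] at hf ⊢
  intro x hx y hy
  calc ‖_root_.averagedMap μ f x - _root_.averagedMap μ f y‖
        = ‖μ • (f x - f y) + (1 - μ) • (x - y)‖ := by
        unfold _root_.averagedMap; congr 1; module
    _ ≤ μ * ‖f x - f y‖ + (1 - μ) * ‖x - y‖ := by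
        refine (norm_add_le _ _).trans_eq ?_
        rw [norm_smul_of_nonneg hμ.1, norm_smul_of_nonneg (sub_nonneg.2 hμ.2)]
    _ ≤ μ * ‖x - y‖ + (1 - μ) * ‖x - y‖ := by
        gcongr
        · exact hμ.1
        · exact hf hx hy
    _ = ‖x - y‖ := by ring

theorem isFixedPt_of_norm_averagedMap_sub_eq [StrictConvexSpace ℝ E] (hμ : μ ∈ Ioo 0 1)
    (hfx : ‖f x - z‖ ≤ ‖x - z‖) (heq : ‖averagedMap μ f x - z‖ = ‖x - z‖) : IsFixedPt f x := by
  by_contra hne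
  refine (norm_combo_lt_of_ne hfx le_rfl (fun h => hne (sub_left_injective h)) hμ.1
    (sub_pos.2 hμ.2) (add_sub_cancel μ 1)).ne ?_
  rw [← heq]
  unfold averagedMap
  congr 1
  module

end NormedAveraged

section Umap

variable {E : Type*} [AddCommGroup E] [Module ℝ E] {C : Set E} {T : ℕ → E → E}
  {μ : ℕ → ℝ} {n k : ℕ} {x : E}

theorem Umap_of_lt (h : n < k) : Umap T μ n k = id := by
  ext x
  rw [Umap, if_pos (show n + 1 ≤ k from h)]
  rfl

theorem Umap_of_le (h : k ≤ n) :
    Umap T μ n k = averagedMap (μ k) (T k ∘ Umap T μ n (k + 1)) := by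
  ext x
  rw [Umap, if_neg (by omega)]
  rfl

theorem isFixedPt_Umap (hx : ∀ i ∈ Icc k n, IsFixedPt (T i) x) : IsFixedPt (Umap T μ n k) x := by
  induction k using Nat.decreasing_induction_above (n := n) with
  | of_lt k hk => rw [Umap_of_lt hk]; exact isFixedPt_id x
  | of_le k hk ih =>
    rw [Umap_of_le hk]
    exact ((hx k ⟨le_rfl, hk⟩).comp
      (ih fun i hi => hx i (Icc_subset_Icc_left k.le_succ hi))).averagedMap

theorem Convex.mapsTo_Umap (hC : Convex ℝ C) (hT : ∀ i ∈ Icc k n, MapsTo (T i) C C)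
    (hμ : ∀ i ∈ Icc k n, μ i ∈ Icc 0 1) : MapsTo (Umap T μ n k) C C := by
  induction k using Nat.decreasing_induction_above (n := n) with
  | of_lt k hk => rw [Umap_of_lt hk]; exact mapsTo_id C
  | of_le k hk ih =>
    have hsub : Icc (k + 1) n ⊆ Icc k n := Icc_subset_Icc_left k.le_succ
    rw [Umap_of_le hk]
    exact hC.mapsTo_averagedMap
      ((hT k ⟨le_rfl, hk⟩).comp (ih (fun i hi => hT i (hsub hi)) fun i hi => hμ i (hsub hi)))
      (hμ k ⟨le_rfl, hk⟩)

end Umap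

section NormedUmap

variable {E : Type*} [NormedAddCommGroup E] [NormedSpace ℝ E] {C : Set E} {T : ℕ → E → E}
  {μ : ℕ → ℝ} {n k : ℕ} {x z : E}

theorem Convex.lipschitzOnWith_Umap (hC : Convex ℝ C) (hT : ∀ i ∈ Icc k n, MapsTo (T i) C C)
    (hTlip : ∀ i ∈ Icc k n, LipschitzOnWith 1 (T i) C) (hμ : ∀ i ∈ Icc k n, μ i ∈ Icc 0 1) :
    LipschitzOnWith 1 (Umap T μ n k) C := by
  induction k using Nat.decreasing_induction_above (n := n) with
  | of_lt k hk => rw [Umap_of_lt hk]; exact LipschitzWith.id.lipschitzOnWith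
  | of_le k hk ih =>
    have hsub : Icc (k + 1) n ⊆ Icc k n := Icc_subset_Icc_left k.le_succ
    have hU := ih (fun i hi => hT i (hsub hi)) (fun i hi => hTlip i (hsub hi))
      fun i hi => hμ i (hsub hi)
    rw [Umap_of_le hk]
    refine LipschitzOnWith.averagedMap ?_ (hμ k ⟨le_rfl, hk⟩)
    simpa using (hTlip k ⟨le_rfl, hk⟩).comp hU
      (hC.mapsTo_Umap (fun i hi => hT i (hsub hi)) fun i hi => hμ i (hsub hi))

variable [StrictConvexSpace ℝ E]

theorem Convex.isFixedPt_Umap_of_norm_sub_eq (hC : Convex ℝ C)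
    (hT : ∀ i ∈ Icc k n, MapsTo (T i) C C) (hTlip : ∀ i ∈ Icc k n, LipschitzOnWith 1 (T i) C)
    (hμ : ∀ i ∈ Icc k n, μ i ∈ Ioo 0 1) (hz : z ∈ C) (hzT : ∀ i ∈ Icc k n, IsFixedPt (T i) z)
    (hx : x ∈ C) (heq : ‖Umap T μ n k x - z‖ = ‖x - z‖) : IsFixedPt (Umap T μ n k) x := by
  rcases lt_or_ge n k with hk | hk
  · rw [Umap_of_lt hk]
    exact isFixedPt_id x
  have hkk : k ∈ Icc k n := ⟨le_rfl, hk⟩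
  have hsub : Icc (k + 1) n ⊆ Icc k n := Icc_subset_Icc_left k.le_succ
  have hμI : ∀ i ∈ Icc (k + 1) n, μ i ∈ Icc 0 1 := fun i hi => Ioo_subset_Icc_self (hμ i (hsub hi))
  have hTU : LipschitzOnWith 1 (T k ∘ Umap T μ n (k + 1)) C := by
    simpa using (hTlip k hkk).comp
      (hC.lipschitzOnWith_Umap (fun i hi => hT i (hsub hi)) (fun i hi => hTlip i (hsub hi)) hμI)
      (hC.mapsTo_Umap (fun i hi => hT i (hsub hi)) hμI)
  have hTUz : IsFixedPt (T k ∘ Umap T μ n (k + 1)) z :=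
    (hzT k hkk).comp (isFixedPt_Umap fun i hi => hzT i (hsub hi))
  rw [Umap_of_le hk] at heq ⊢
  exact (isFixedPt_averagedMap_iff (hμ k hkk).1.ne').2
    (isFixedPt_of_norm_averagedMap_sub_eq (hμ k hkk) (hTU.norm_sub_le_of_isFixedPt hx hz hTUz) heq)

theorem Convex.isFixedPt_Umap_iff (hC : Convex ℝ C)
    (hT : ∀ i ∈ Icc k n, MapsTo (T i) C C) (hTlip : ∀ i ∈ Icc k n, LipschitzOnWith 1 (T i) C)
    (hμ : ∀ i ∈ Icc k n, μ i ∈ Ioo 0 1) (hz : z ∈ C) (hzT : ∀ i ∈ Icc k n, IsFixedPt (T i) z)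
    (hx : x ∈ C) : IsFixedPt (Umap T μ n k) x ↔ ∀ i ∈ Icc k n, IsFixedPt (T i) x := by
  refine ⟨fun hUx => ?_, isFixedPt_Umap⟩
  induction k using Nat.decreasing_induction_above (n := n) with
  | of_lt k hk => exact fun i hi => absurd (hi.1.trans hi.2) (not_le.2 hk)
  | of_le k hk ih =>
    have hkk : k ∈ Icc k n := ⟨le_rfl, hk⟩
    have hsub : Icc (k + 1) n ⊆ Icc k n := Icc_subset_Icc_left k.le_succ
    have hT' := fun i hi => hT i (hsub hi)
    have hTlip' := fun i hi => hTlip i (hsub hi)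
    have hμ' := fun i hi => hμ i (hsub hi)
    have hzT' := fun i hi => hzT i (hsub hi)
    have hμI : ∀ i ∈ Icc (k + 1) n, μ i ∈ Icc 0 1 := fun i hi => Ioo_subset_Icc_self (hμ' i hi)
    rw [Umap_of_le hk, isFixedPt_averagedMap_iff (hμ k hkk).1.ne'] at hUx
    have hUx' : IsFixedPt (Umap T μ n (k + 1)) x := by
      refine hC.isFixedPt_Umap_of_norm_sub_eq hT' hTlip' hμ' hz hzT' hx (le_antisymm
        ((hC.lipschitzOnWith_Umap hT' hTlip' hμI).norm_sub_le_of_isFixedPt hx hz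
          (isFixedPt_Umap hzT')) ?_)
      calc ‖x - z‖ = ‖T k (Umap T μ n (k + 1) x) - z‖ := by rw [← comp_apply (f := T k), hUx.eq]
        _ ≤ ‖Umap T μ n (k + 1) x - z‖ :=
          (hTlip k hkk).norm_sub_le_of_isFixedPt (hC.mapsTo_Umap hT' hμI hx) hz (hzT k hkk)
    have hTx : IsFixedPt (T k) x := by
      have := hUx.eq
      rwa [comp_apply, hUx'.eq] at this
    intro i hi
    rcases hi.1.eq_or_lt with rfl | hki
    · exact hTx
    · exact ih hT' hTlip' hμ' hzT' hUx' i ⟨hki, hi.2⟩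

end NormedUmap

theorem stmt_10_general {H : Type*} [NormedAddCommGroup H] [InnerProductSpace ℝ H]
    (C : Set H) (hCcv : Convex ℝ C)
    (T : ℕ → H → H)
    (hTmaps : ∀ i, 1 ≤ i → Set.MapsTo (T i) C C)
    (hTne : ∀ i, 1 ≤ i → ∀ x ∈ C, ∀ y ∈ C, ‖T i x - T i y‖ ≤ ‖x - y‖)
    (hFix : ∃ x ∈ C, ∀ i, 1 ≤ i → T i x = x)
    (μ : ℕ → ℝ) (μbar : ℝ) (hμbar : μbar < 1)
    (hμ : ∀ i, 1 ≤ i → 0 < μ i ∧ μ i ≤ μbar) :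
    ∀ n, 1 ≤ n →
      (∀ x ∈ C, ∀ y ∈ C, ‖Wmap T μ n x - Wmap T μ n y‖ ≤ ‖x - y‖) ∧
      {x : H | x ∈ C ∧ Wmap T μ n x = x}
        = ⋂ i ∈ Set.Icc 1 n, {x : H | x ∈ C ∧ T i x = x} := by
  intro n hn
  obtain ⟨z, hz, hzT⟩ := hFix
  have hT : ∀ i ∈ Icc 1 n, MapsTo (T i) C C := fun i hi => hTmaps i hi.1
  have hTlip : ∀ i ∈ Icc 1 n, LipschitzOnWith 1 (T i) C := fun i hi =>
    lipschitzOnWith_iff_norm_sub_le.2 fun x hx y hy => by simpa using hTne i hi.1 x hx y hy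
  have hμ' : ∀ i ∈ Icc 1 n, μ i ∈ Ioo 0 1 := fun i hi =>
    ⟨(hμ i hi.1).1, (hμ i hi.1).2.trans_lt hμbar⟩
  have hWfix := fun x (hx : x ∈ C) =>
    hCcv.isFixedPt_Umap_iff hT hTlip hμ' hz (fun i hi => hzT i hi.1) hx
  refine ⟨fun x hx y hy => ?_, ?_⟩
  · have hW := hCcv.lipschitzOnWith_Umap hT hTlip fun i hi => Ioo_subset_Icc_self (hμ' i hi)
    simpa only [Wmap, NNReal.coe_one, one_mul] using lipschitzOnWith_iff_norm_sub_le.1 hW hx hy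
  ext x
  simp only [mem_ofPred_eq, mem_iInter]
  refine ⟨fun ⟨hx, hWx⟩ i hi => ⟨hx, (hWfix x hx).1 hWx i hi⟩, fun h => ?_⟩
  have hx := (h 1 ⟨le_rfl, hn⟩).1
  exact ⟨hx, (hWfix x hx).2 fun i hi => (h i hi).2⟩

/-- For an infinite family of nonexpansive self-maps `T i` of a nonempty closed
convex `C ⊆ H` with common fixed point, and `0 < μ i ≤ μbar < 1`, each
`W`-mapping `W n` is nonexpansive on `C` and
`Fix(W n) = ⋂_{i=1}^{n} Fix(T i)`. -/
theorem stmt_10 {H : Type*} [NormedAddCommGroup H] [InnerProductSpace ℝ H]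
    [CompleteSpace H]
    (C : Set H) (hCne : C.Nonempty) (hCcl : IsClosed C) (hCcv : Convex ℝ C)
    (T : ℕ → H → H)
    (hTmaps : ∀ i, 1 ≤ i → Set.MapsTo (T i) C C)
    (hTne : ∀ i, 1 ≤ i → ∀ x ∈ C, ∀ y ∈ C, ‖T i x - T i y‖ ≤ ‖x - y‖)
    (hFix : ∃ x ∈ C, ∀ i, 1 ≤ i → T i x = x)
    (μ : ℕ → ℝ) (μbar : ℝ) (hμbar : μbar < 1)
    (hμ : ∀ i, 1 ≤ i → 0 < μ i ∧ μ i ≤ μbar) :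
    ∀ n, 1 ≤ n →
      (∀ x ∈ C, ∀ y ∈ C, ‖Wmap T μ n x - Wmap T μ n y‖ ≤ ‖x - y‖) ∧
      {x : H | x ∈ C ∧ Wmap T μ n x = x}
        = ⋂ i ∈ Set.Icc 1 n, {x : H | x ∈ C ∧ T i x = x} :=
  stmt_10_general C hCcv T hTmaps hTne hFix μ μbar hμbar hμ
end

section
/- Let H be a real Hilbert space, let S be a nonempty closed convex subset of H, let A be a strongly positive bounded linear self-adjoint operator on H with coefficient γ̄ > 0 and ‖A‖ ≤ 1, let f : H → H be a contraction with Lipschitz constant ρ ∈ (0,1), and let γ > 0 satisfy γρ < γ̄. Then the mapping x ↦ P_S(γ f(x) + (I − A) x) is a contraction on H with constant 1 − (γ̄ − γρ), and consequently it has a unique fixed point q ∈ S, which satisfies ⟨γ f(q) − A q, p − q⟩ ≤ 0 for all p ∈ S. -/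
/-!
The metric projection onto a convex set is characterised by the variational inequality
`⟪x - P x, w - P x⟫ ≤ 0`, which makes it nonexpansive. Since `A` is symmetric with
`γ̄ ≤ ⟪A x, x⟫ / ‖x‖² ≤ 1`, the symmetric operator `I - A` has Rayleigh quotients in `[0, 1 - γ̄]`,
hence norm at most `1 - γ̄`. The map `x ↦ P_S (γ f x + (I - A) x)` is then Lipschitz with constant
`γρ + (1 - γ̄) < 1`, and Banach's fixed point theorem gives the unique fixed point `q`; the
variational inequality at `γ f q + (I - A) q` is exactly `⟪γ f q - A q, p - q⟫ ≤ 0`.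
-/

open scoped RealInnerProductSpace

section

variable {H : Type*} [NormedAddCommGroup H] [InnerProductSpace ℝ H]

theorem real_inner_sub_le_zero_of_forall_norm_sub_le {K : Set H} (hK : Convex ℝ K) {u v : H}
    (hv : v ∈ K) (hmin : ∀ w ∈ K, ‖u - v‖ ≤ ‖u - w‖) : ∀ w ∈ K, ⟪u - v, w - v⟫ ≤ 0 := by
  have : Nonempty K := ⟨⟨v, hv⟩⟩
  refine (norm_eq_iInf_iff_real_inner_le_zero hK hv).mp (le_antisymm ?_ ?_)
  · exact le_ciInf fun w : K => hmin w w.2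
  · exact ciInf_le ⟨0, Set.forall_mem_range.2 fun w : K => norm_nonneg (u - w)⟩ ⟨v, hv⟩

theorem norm_sub_le_of_real_inner_sub_le_zero {a b a' b' : H}
    (ha : ⟪a - a', b' - a'⟫ ≤ 0) (hb : ⟪b - b', a' - b'⟫ ≤ 0) : ‖a' - b'‖ ≤ ‖a - b‖ := by
  have hsum : ‖a' - b'‖ ^ 2 - ⟪a - b, a' - b'⟫ = ⟪a - a', b' - a'⟫ + ⟪b - b', a' - b'⟫ := by
    rw [← real_inner_self_eq_norm_sq]
    simp only [inner_sub_left, inner_sub_right, real_inner_comm a' b']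
    ring
  have key : ‖a' - b'‖ * ‖a' - b'‖ ≤ ‖a - b‖ * ‖a' - b'‖ := by
    nlinarith [real_inner_le_norm (a - b) (a' - b')]
  rcases (norm_nonneg (a' - b')).eq_or_lt with h0 | h0
  · rw [← h0]; exact norm_nonneg _
  · exact le_of_mul_le_mul_right key h0

theorem ContinuousLinearMap.norm_apply_le_of_abs_inner_self_le {T : H →L[ℝ] H}
    (hT : T.IsSymmetric) {c : ℝ} (hc : ∀ x, |⟪T x, x⟫| ≤ c * ‖x‖ ^ 2) (x : H) :
    ‖T x‖ ≤ c * ‖x‖ := by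
  rcases eq_or_ne x 0 with rfl | hx
  · simp
  have hx2 : 0 < ‖x‖ ^ 2 := by positivity
  have hc0 : 0 ≤ c := nonneg_of_mul_nonneg_left ((abs_nonneg _).trans (hc x)) hx2
  have hnorm : ‖T‖ ≤ c := by
    rw [T.norm_eq_iSup_rayleighQuotient hT]
    refine ciSup_le fun y => ?_
    rcases eq_or_ne y 0 with rfl | hy
    · simpa using hc0
    rw [rayleighQuotient, reApplyInnerSelf_apply, RCLike.re_to_real, abs_div, abs_sq,
      div_le_iff₀ (by positivity)]
    exact hc y
  exact (T.le_opNorm x).trans (mul_le_mul_of_nonneg_right hnorm (norm_nonneg x))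

theorem norm_sub_apply_le_of_strongly_positive {A : H →L[ℝ] H}
    (hA : ∀ x y : H, ⟪A x, y⟫ = ⟪x, A y⟫) {γbar : ℝ} (hApos : ∀ x : H, γbar * ‖x‖ ^ 2 ≤ ⟪A x, x⟫)
    (hAnorm : ‖A‖ ≤ 1) (x : H) : ‖x - A x‖ ≤ (1 - γbar) * ‖x‖ := by
  have hB : (ContinuousLinearMap.id ℝ H - A).IsSymmetric := fun x y => by
    simp [inner_sub_left, inner_sub_right, hA]
  refine (ContinuousLinearMap.id ℝ H - A).norm_apply_le_of_abs_inner_self_le hB (fun y => ?_) x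
  have hAle : ⟪A y, y⟫ ≤ ‖y‖ ^ 2 :=
    calc ⟪A y, y⟫ ≤ ‖A y‖ * ‖y‖ := real_inner_le_norm _ _
      _ ≤ ‖y‖ * ‖y‖ := by gcongr; exact A.le_of_opNorm_le hAnorm y |>.trans_eq (one_mul _)
      _ = ‖y‖ ^ 2 := (sq _).symm
  have hBy : ⟪(ContinuousLinearMap.id ℝ H - A) y, y⟫ = ‖y‖ ^ 2 - ⟪A y, y⟫ := by
    simp [inner_sub_left]
  rw [hBy, abs_of_nonneg (by linarith), sub_mul, one_mul]
  linarith [hApos y]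

end

theorem exists_unique_isFixedPt_of_norm_sub_le {E : Type*} [NormedAddCommGroup E]
    [CompleteSpace E] {T : E → E} {k : ℝ}
    (hk : k < 1) (hT : ∀ x y, ‖T x - T y‖ ≤ k * ‖x - y‖) : ∃! q, T q = q := by
  have hTk : ContractingWith k.toNNReal T :=
    ⟨Real.toNNReal_lt_one.mpr hk, .of_dist_le' fun x y => by simpa [dist_eq_norm] using hT x y⟩
  exact ⟨_, hTk.fixedPoint_isFixedPt, fun q hq => hTk.fixedPoint_unique hq⟩

theorem stmt_16_general {H : Type*} [NormedAddCommGroup H] [InnerProductSpace ℝ H]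
    [CompleteSpace H]
    (S : Set H) (hScv : Convex ℝ S)
    (PS : H → H)
    (hPS : ∀ x : H, PS x ∈ S ∧ ∀ y ∈ S, ‖x - PS x‖ ≤ ‖x - y‖)
    (A : H →L[ℝ] H) (hAsa : ∀ x y : H, ⟪A x, y⟫ = ⟪x, A y⟫)
    (γbar : ℝ)
    (hApos : ∀ x : H, γbar * ‖x‖ ^ 2 ≤ ⟪A x, x⟫)
    (hAnorm : ‖A‖ ≤ 1)
    (f : H → H) (ρ : ℝ)
    (hf : ∀ x y : H, ‖f x - f y‖ ≤ ρ * ‖x - y‖)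
    (γ : ℝ) (hγ : 0 < γ) (hγρ : γ * ρ < γbar) :
    (∀ x y : H,
      ‖PS (γ • f x + (x - A x)) - PS (γ • f y + (y - A y))‖
        ≤ (1 - (γbar - γ * ρ)) * ‖x - y‖) ∧
    ∃! q : H, q ∈ S ∧ PS (γ • f q + (q - A q)) = q ∧
      ∀ p ∈ S, ⟪γ • f q - A q, p - q⟫ ≤ 0 := by
  have hvar : ∀ x, ∀ w ∈ S, ⟪x - PS x, w - PS x⟫ ≤ 0 := fun x =>
    real_inner_sub_le_zero_of_forall_norm_sub_le hScv (hPS x).1 (hPS x).2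
  have hcontr : ∀ x y : H, ‖PS (γ • f x + (x - A x)) - PS (γ • f y + (y - A y))‖
      ≤ (1 - (γbar - γ * ρ)) * ‖x - y‖ := fun x y =>
    calc _ ≤ ‖(γ • f x + (x - A x)) - (γ • f y + (y - A y))‖ :=
          norm_sub_le_of_real_inner_sub_le_zero (hvar _ _ (hPS _).1) (hvar _ _ (hPS _).1)
      _ = ‖γ • (f x - f y) + ((x - y) - A (x - y))‖ := by
          rw [map_sub, smul_sub]; abel_nf
      _ ≤ ‖γ • (f x - f y)‖ + ‖(x - y) - A (x - y)‖ := norm_add_le _ _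
      _ ≤ γ * (ρ * ‖x - y‖) + (1 - γbar) * ‖x - y‖ := by
          rw [norm_smul, Real.norm_of_nonneg hγ.le]
          gcongr
          exacts [hf x y, norm_sub_apply_le_of_strongly_positive hAsa hApos hAnorm _]
      _ = (1 - (γbar - γ * ρ)) * ‖x - y‖ := by ring
  obtain ⟨q, hq, huniq⟩ := exists_unique_isFixedPt_of_norm_sub_le (by linarith) hcontr
  refine ⟨hcontr, q, ⟨hq ▸ (hPS _).1, hq, fun p hp => ?_⟩, fun q' hq' => huniq q' hq'.2.1⟩
  have h := hvar (γ • f q + (q - A q)) p hp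
  rwa [hq, show γ • f q + (q - A q) - q = γ • f q - A q by abel] at h

/-- If `A` is strongly positive bounded linear self-adjoint with coefficient
`γbar > 0` and `‖A‖ ≤ 1`, `f` is a `ρ`-contraction and `0 < γ` with
`γ * ρ < γbar`, then `x ↦ P_S (γ f x + (I - A) x)` is a contraction with
constant `1 - (γbar - γρ)`; consequently it has a unique fixed point `q ∈ S`,
which satisfies `⟪γ f q - A q, p - q⟫ ≤ 0` for all `p ∈ S`. -/
theorem stmt_16 {H : Type*} [NormedAddCommGroup H] [InnerProductSpace ℝ H]
    [CompleteSpace H]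
    (S : Set H) (hSne : S.Nonempty) (hScl : IsClosed S) (hScv : Convex ℝ S)
    (PS : H → H)
    (hPS : ∀ x : H, PS x ∈ S ∧ ∀ y ∈ S, ‖x - PS x‖ ≤ ‖x - y‖)
    (A : H →L[ℝ] H) (hAsa : ∀ x y : H, ⟪A x, y⟫ = ⟪x, A y⟫)
    (γbar : ℝ) (hγbar : 0 < γbar)
    (hApos : ∀ x : H, γbar * ‖x‖ ^ 2 ≤ ⟪A x, x⟫)
    (hAnorm : ‖A‖ ≤ 1)
    (f : H → H) (ρ : ℝ) (hρ : ρ ∈ Set.Ioo (0 : ℝ) 1)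
    (hf : ∀ x y : H, ‖f x - f y‖ ≤ ρ * ‖x - y‖)
    (γ : ℝ) (hγ : 0 < γ) (hγρ : γ * ρ < γbar) :
    (∀ x y : H,
      ‖PS (γ • f x + (x - A x)) - PS (γ • f y + (y - A y))‖
        ≤ (1 - (γbar - γ * ρ)) * ‖x - y‖) ∧
    ∃! q : H, q ∈ S ∧ PS (γ • f q + (q - A q)) = q ∧
      ∀ p ∈ S, ⟪γ • f q - A q, p - q⟫ ≤ 0 :=
  stmt_16_general S hScv PS hPS A hAsa γbar hApos hAnorm f ρ hf γ hγ hγρ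
end

section
/- Let C be a nonempty closed convex subset of a real Hilbert space H, let F : C × C → ℝ satisfy (A1)–(A4), and for r > 0 let T_r denote the resolvent of F. Then for all r, s > 0 and all x, y ∈ H, ‖T_r x − T_s y‖ ≤ ‖x − y‖ + |1 − s/r| · ‖T_r x − x‖. -/
open Filter Topology
open scoped RealInnerProductSpace

/-- If `F : C × C → ℝ` satisfies (A1)–(A4) and `T r : H → C` denotes the
resolvent of `F` of parameter `r > 0`, then for all `r, s > 0` and `x, y ∈ H`,
`‖T r x - T s y‖ ≤ ‖x - y‖ + |1 - s/r| * ‖T r x - x‖`. -/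
theorem stmt_17 {H : Type*} [NormedAddCommGroup H] [InnerProductSpace ℝ H]
    [CompleteSpace H]
    (C : Set H) (hCne : C.Nonempty) (hCcl : IsClosed C) (hCcv : Convex ℝ C)
    (F : H → H → ℝ)
    (hF1 : ∀ x ∈ C, F x x = 0)
    (hF2 : ∀ x ∈ C, ∀ y ∈ C, F x y + F y x ≤ 0)
    (hF3 : ∀ x ∈ C, ∀ y ∈ C, ∀ z ∈ C,
      limsup (fun t : ℝ => F (t • z + (1 - t) • x) y) (𝓝[>] 0) ≤ F x y)
    (hF4 : ∀ x ∈ C, ConvexOn ℝ C (fun y => F x y)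
      ∧ LowerSemicontinuousOn (fun y => F x y) C)
    (T : ℝ → H → H)
    (hT : ∀ r : ℝ, 0 < r → ∀ x : H,
      T r x ∈ C ∧ ∀ y ∈ C, 0 ≤ F (T r x) y + (1 / r) * ⟪y - T r x, T r x - x⟫) :
    ∀ r s : ℝ, 0 < r → 0 < s → ∀ x y : H,
      ‖T r x - T s y‖ ≤ ‖x - y‖ + |1 - s / r| * ‖T r x - x‖ := by
  intro r s hr hs x y
  obtain ⟨hu, h1⟩ := hT r hr x
  obtain ⟨hv, h2⟩ := hT s hs y
  set u := T r x with hu_def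
  set v := T s y with hv_def
  have h1' := h1 v hv
  have h2' := h2 u hu
  have hm := hF2 u hu v hv
  set a : ℝ := ⟪v - u, u - x⟫ with ha
  set b : ℝ := ⟪u - v, v - y⟫ with hb
  have key : 0 ≤ (1/r) * a + (1/s) * b := by linarith
  have key2 : 0 ≤ (s/r) * a + b := by
    have h := mul_nonneg hs.le key
    have heq : s * ((1/r) * a + (1/s) * b) = (s/r) * a + b := by
      field_simp
    linarith [heq ▸ h]
  have hsplit : b = -‖v - u‖^2 - a + ⟪v - u, y - x⟫ := by
    have h1 : (v : H) - y = (v - u) + (u - x) - (y - x) := by abel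
    have h2 : (u : H) - v = -(v - u) := by abel
    rw [hb, h2, h1, inner_neg_left, inner_sub_right, inner_add_right,
      real_inner_self_eq_norm_sq]
    ring
  have hkey3 : ‖v - u‖^2 ≤ (s/r - 1) * a + ⟪v - u, y - x⟫ := by
    rw [hsplit] at key2; linarith
  have hrhs : (s/r - 1) * a + ⟪v - u, y - x⟫
      = ⟪v - u, (s/r - 1) • (u - x) + (y - x)⟫ := by
    rw [inner_add_right, real_inner_smul_right]
  have hcs : ⟪v - u, (s/r - 1) • (u - x) + (y - x)⟫
      ≤ ‖v - u‖ * ‖(s/r - 1) • (u - x) + (y - x)‖ := real_inner_le_norm _ _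
  have hnorm : ‖(s/r - 1) • (u - x) + (y - x)‖ ≤ ‖x - y‖ + |1 - s/r| * ‖u - x‖ := by
    calc ‖(s/r - 1) • (u - x) + (y - x)‖
        ≤ ‖(s/r - 1) • (u - x)‖ + ‖y - x‖ := norm_add_le _ _
      _ = |s/r - 1| * ‖u - x‖ + ‖y - x‖ := by rw [norm_smul, Real.norm_eq_abs]
      _ = ‖x - y‖ + |1 - s/r| * ‖u - x‖ := by
          rw [abs_sub_comm, norm_sub_rev y x]; ring
  have hfin : ‖v - u‖^2 ≤ ‖v - u‖ * (‖x - y‖ + |1 - s/r| * ‖u - x‖) := by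
    calc ‖v - u‖^2 ≤ ⟪v - u, (s/r - 1) • (u - x) + (y - x)⟫ := by
          rw [← hrhs]; exact hkey3
      _ ≤ ‖v - u‖ * ‖(s/r - 1) • (u - x) + (y - x)‖ := hcs
      _ ≤ ‖v - u‖ * (‖x - y‖ + |1 - s/r| * ‖u - x‖) :=
          mul_le_mul_of_nonneg_left hnorm (norm_nonneg _)
  rw [norm_sub_rev]
  rcases (norm_nonneg (v - u)).eq_or_lt with h0 | h0
  · rw [← h0]; positivity
  · have := hfin
    rw [sq] at this
    exact le_of_mul_le_mul_left (by linarith [this]) h0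
end

section
/- Let H be a real Hilbert space and A a strongly positive bounded linear self-adjoint operator on H with coefficient γ̄ > 0. If β is a real number with 0 ≤ β ≤ ‖A‖⁻¹, then the operator I − βA is positive, i.e. ⟨(I − βA)x, x⟩ ≥ 0 for all x ∈ H, and its operator norm equals sup{⟨(I − βA)x, x⟩ : x ∈ H, ‖x‖ = 1} and satisfies ‖I − βA‖ ≤ 1 − β γ̄. -/
open scoped RealInnerProductSpace

/-- If `A` is a strongly positive bounded linear self-adjoint operator on a real
Hilbert space `H` with coefficient `γbar > 0` and `0 ≤ β ≤ ‖A‖⁻¹`, then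
`I - β • A` is a positive operator, its norm equals
`sup {⟪(I - β A) x, x⟫ : ‖x‖ = 1}`, and `‖I - β • A‖ ≤ 1 - β * γbar`. -/
theorem stmt_19 {H : Type*} [NormedAddCommGroup H] [InnerProductSpace ℝ H]
    [CompleteSpace H]
    (A : H →L[ℝ] H) (hAsa : ∀ x y : H, ⟪A x, y⟫ = ⟪x, A y⟫)
    (γbar : ℝ) (hγbar : 0 < γbar)
    (hApos : ∀ x : H, γbar * ‖x‖ ^ 2 ≤ ⟪A x, x⟫)
    (β : ℝ) (hβ0 : 0 ≤ β) (hβ : β ≤ ‖A‖⁻¹) :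
    (∀ x : H, 0 ≤ ⟪x - β • A x, x⟫) ∧
    ‖(1 : H →L[ℝ] H) - β • A‖
      = sSup ((fun x : H => ⟪x - β • A x, x⟫) '' {x : H | ‖x‖ = 1}) ∧
    ‖(1 : H →L[ℝ] H) - β • A‖ ≤ 1 - β * γbar := by
  set T : H →L[ℝ] H := (1 : H →L[ℝ] H) - β • A with hTdef
  have hT : ∀ x : H, T x = x - β • A x := by
    intro x; simp [hTdef]
  have hAle : ∀ x : H, ⟪A x, x⟫ ≤ ‖A‖ * ‖x‖ ^ 2 := by
    intro x
    calc ⟪A x, x⟫ ≤ ‖A x‖ * ‖x‖ := real_inner_le_norm _ _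
      _ ≤ (‖A‖ * ‖x‖) * ‖x‖ :=
        mul_le_mul_of_nonneg_right (A.le_opNorm x) (norm_nonneg x)
      _ = ‖A‖ * ‖x‖ ^ 2 := by ring
  have hβA : β * ‖A‖ ≤ 1 := by
    rcases eq_or_lt_of_le (norm_nonneg A) with h0 | h0
    · rw [← h0]; norm_num
    · calc β * ‖A‖ ≤ ‖A‖⁻¹ * ‖A‖ :=
          mul_le_mul_of_nonneg_right hβ (le_of_lt h0)
        _ = 1 := inv_mul_cancel₀ (ne_of_gt h0)
  -- positivity
  have hpos : ∀ x : H, 0 ≤ ⟪x - β • A x, x⟫ := by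
    intro x
    have h1 : ⟪x - β • A x, x⟫ = ‖x‖ ^ 2 - β * ⟪A x, x⟫ := by
      rw [inner_sub_left, real_inner_smul_left, real_inner_self_eq_norm_sq]
    have h2 : β * ⟪A x, x⟫ ≤ β * (‖A‖ * ‖x‖ ^ 2) :=
      mul_le_mul_of_nonneg_left (hAle x) hβ0
    nlinarith [sq_nonneg ‖x‖]
  have hinner : ∀ x : H, ⟪x - β • A x, x⟫ = ‖x‖ ^ 2 - β * ⟪A x, x⟫ := by
    intro x
    rw [inner_sub_left, real_inner_smul_left, real_inner_self_eq_norm_sq]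
  -- each element of the image set is ≤ 1 - β * γbar and ≤ ‖T‖
  have helt : ∀ s ∈ (fun x : H => ⟪x - β • A x, x⟫) '' {x : H | ‖x‖ = 1},
      s ≤ 1 - β * γbar := by
    rintro s ⟨x, hx, rfl⟩
    have hx1 : ‖x‖ = 1 := hx
    dsimp only
    have h1 := hApos x
    have h2 : β * γbar ≤ β * ⟪A x, x⟫ := by
      have := mul_le_mul_of_nonneg_left h1 hβ0
      simpa [hx1] using this
    rw [hinner, hx1]; linarith
  have heltT : ∀ s ∈ (fun x : H => ⟪x - β • A x, x⟫) '' {x : H | ‖x‖ = 1},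
      s ≤ ‖T‖ := by
    rintro s ⟨x, hx, rfl⟩
    have hx1 : ‖x‖ = 1 := hx
    calc ⟪x - β • A x, x⟫ = ⟪T x, x⟫ := by rw [hT]
      _ ≤ ‖T x‖ * ‖x‖ := real_inner_le_norm _ _
      _ ≤ (‖T‖ * ‖x‖) * ‖x‖ :=
        mul_le_mul_of_nonneg_right (T.le_opNorm x) (norm_nonneg x)
      _ = ‖T‖ := by rw [hx1]; ring
  rcases subsingleton_or_nontrivial H with hsub | hnt
  · -- trivial space
    have hA0 : A = 0 := by ext x; exact Subsingleton.elim _ _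
    have hβ0' : β = 0 := le_antisymm (by simpa [hA0] using hβ) hβ0
    have hTn : ‖T‖ = 0 := by
      have : T = 0 := by ext x; exact Subsingleton.elim _ _
      rw [this, norm_zero]
    have hempty : {x : H | ‖x‖ = 1} = ∅ := by
      ext x
      simp only [Set.mem_setOf_eq, Set.mem_empty_iff_false, iff_false]
      have : x = 0 := Subsingleton.elim _ _
      simp [this]
    refine ⟨hpos, ?_, ?_⟩
    · rw [hTn, hempty]; simp [Real.sSup_empty]
    · rw [hTn, hβ0']; norm_num
  · -- nontrivial space
    obtain ⟨u, hu⟩ := exists_norm_eq H (zero_le_one' ℝ)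
    set S := (fun x : H => ⟪x - β • A x, x⟫) '' {x : H | ‖x‖ = 1} with hSdef
    have hSne : S.Nonempty := ⟨_, ⟨u, hu, rfl⟩⟩
    have hSbdd : BddAbove S := ⟨1 - β * γbar, helt⟩
    set M := sSup S with hMdef
    have hM1 : M ≤ 1 - β * γbar := csSup_le hSne helt
    have hMT : M ≤ ‖T‖ := csSup_le hSne heltT
    have hM0 : 0 ≤ M := by
      have h1 : ⟪u - β • A u, u⟫ ∈ S := ⟨u, hu, rfl⟩
      exact le_trans (hpos u) (le_csSup hSbdd h1)
    -- quadratic form bound: ⟪T z, z⟫ ≤ M ‖z‖²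
    have hQ : ∀ z : H, ⟪T z, z⟫ ≤ M * ‖z‖ ^ 2 := by
      intro z
      rcases eq_or_ne z 0 with rfl | hz
      · simp
      · have hzn : (0 : ℝ) < ‖z‖ := norm_pos_iff.mpr hz
        set w := ‖z‖⁻¹ • z with hwdef
        have hw1 : ‖w‖ = 1 := by
          rw [hwdef, norm_smul, norm_inv, norm_norm, inv_mul_cancel₀ (ne_of_gt hzn)]
        have hmem : ⟪w - β • A w, w⟫ ∈ S := ⟨w, hw1, rfl⟩
        have hle : ⟪w - β • A w, w⟫ ≤ M := le_csSup hSbdd hmem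
        have hscale : ⟪w - β • A w, w⟫ = ‖z‖⁻¹ * (‖z‖⁻¹ * ⟪z - β • A z, z⟫) := by
          rw [hwdef, map_smul, smul_comm β, ← smul_sub, real_inner_smul_left,
            real_inner_smul_right]
        have hTz : ⟪T z, z⟫ = ⟪z - β • A z, z⟫ := by rw [hT]
        rw [hTz]
        rw [hscale] at hle
        have := mul_le_mul_of_nonneg_left hle (le_of_lt (mul_pos hzn hzn))
        calc ⟪z - β • A z, z⟫ = (‖z‖ * ‖z‖) * (‖z‖⁻¹ * (‖z‖⁻¹ * ⟪z - β • A z, z⟫)) := by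
              field_simp
          _ ≤ (‖z‖ * ‖z‖) * M := this
          _ = M * ‖z‖ ^ 2 := by ring
    -- T is symmetric
    have hsym : ∀ a b : H, ⟪T a, b⟫ = ⟪a, T b⟫ := by
      intro a b
      rw [hT, hT, inner_sub_left, inner_sub_right, real_inner_smul_left,
        real_inner_smul_right, hAsa]
    have hTpos : ∀ z : H, 0 ≤ ⟪T z, z⟫ := by intro z; rw [hT]; exact hpos z
    -- operator norm bound via polarization
    have hTM : ‖T‖ ≤ M := by
      apply T.opNorm_le_bound hM0
      intro x
      rcases eq_or_ne (T x) 0 with h0 | h0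
      · rw [h0, norm_zero]; positivity
      · have hx0 : x ≠ 0 := by
          intro h; apply h0; rw [h, map_zero]
        have hxn : (0 : ℝ) < ‖x‖ := norm_pos_iff.mpr hx0
        have hTxn : (0 : ℝ) < ‖T x‖ := norm_pos_iff.mpr h0
        set y := (‖x‖ / ‖T x‖) • T x with hydef
        have hyn : ‖y‖ = ‖x‖ := by
          rw [hydef, norm_smul, Real.norm_eq_abs, abs_of_pos (div_pos hxn hTxn)]
          field_simp
        -- polarization identity
        have hpol : 4 * ⟪T x, y⟫ = ⟪T (x + y), x + y⟫ - ⟪T (x - y), x - y⟫ := by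
          have hc : ⟪T y, x⟫ = ⟪T x, y⟫ := by
            rw [hsym, real_inner_comm]
          rw [map_add, map_sub, inner_add_left, inner_add_right, inner_add_right,
            inner_sub_left, inner_sub_right, inner_sub_right, hc]
          ring
        have h1 : ⟪T (x + y), x + y⟫ ≤ M * ‖x + y‖ ^ 2 := hQ _
        have h2 : 0 ≤ ⟪T (x - y), x - y⟫ := hTpos _
        have h3 : ‖x + y‖ ^ 2 ≤ 2 * ‖x‖ ^ 2 + 2 * ‖y‖ ^ 2 := by
          have h := pow_le_pow_left₀ (norm_nonneg (x + y)) (norm_add_le x y) 2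
          nlinarith [sq_nonneg (‖x‖ - ‖y‖)]
        have h4 : 4 * ⟪T x, y⟫ ≤ 4 * M * ‖x‖ ^ 2 := by
          rw [hpol]
          have : M * ‖x + y‖ ^ 2 ≤ M * (2 * ‖x‖ ^ 2 + 2 * ‖y‖ ^ 2) :=
            mul_le_mul_of_nonneg_left h3 hM0
          rw [hyn] at this
          linarith
        have h5 : ⟪T x, y⟫ = ‖x‖ * ‖T x‖ := by
          rw [hydef, real_inner_smul_right, real_inner_self_eq_norm_sq]
          field_simp
        rw [h5] at h4
        nlinarith
    refine ⟨hpos, le_antisymm hTM hMT, ?_⟩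
    exact le_trans (le_antisymm hTM hMT ▸ le_refl _) hM1
end
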